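/- arXiv:2410.10635 — 5 statements merged into one kernel-verified Lean document; each statement's English description precedes it below -/
import Mathlib

section
/- Let α = (n_1,…,n_k) and β = (m_1,…,m_t) be compositions of N, with partial sums ν_0 = 0, ν_j = n_1+⋯+n_j and μ_0 = 0, μ_i = m_1+⋯+m_i. Consider the set S of permutations w of [1,N] such that: (i) w is order preserving on each interval [ν_{j−1}+1, ν_j]; (ii) w⁻¹ is order preserving on each interval [μ_{i−1}+1, μ_i]; (iii) for every j ∈ [1,k] there exists i ∈ [1,t] with w([ν_{j−1}+1, ν_j]) ⊆ [μ_{i−1}+1, μ_i]. Then S is in bijection with the set of ordered partitions (A_1,…,A_t) of [1,k] into t (possibly empty) subsets satisfying m_i = Σ_{j∈A_i} n_j for all i ∈ [1,t]; the element of S attached to (A_1,…,A_t) is the unique permutation that is order preserving from ⋃_{j∈A_i}[ν_{j−1}+1, ν_j] onto [μ_{i−1}+1, μ_i] for every i ∈ [1,t]. -/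
/-!
For an admissible `f`, `phi f` is the inverse of the stable sort of the positions by the key
`x ↦ f (block of x)`. Exactly `m i` positions carry key `i`, so sorting sends them, in order, onto
the `i`-th interval of `β`; inside an `α`-block the key is constant, so stability keeps the block
in order. Conversely, for `w` in `S` condition (iii) produces `f`, the key of `x` becomes the
`β`-block of `w x`, and condition (ii) says precisely that `w⁻¹` is the stable sort for this key,
so `w = phi f`. Injectivity holds because every `α`-block is nonempty, so `f j` is read off
from the `β`-block containing the image of the first position of block `j`.
-/

namespace Stmt11

/-- Partial sums `ν_j = n 0 + ⋯ + n (j-1)` (the tuple is extended by zero beyond `k`). -/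
def psum {k : ℕ} (n : Fin k → ℕ) (j : ℕ) : ℕ :=
  ∑ i ∈ Finset.range j, if h : i < k then n ⟨i, h⟩ else 0

/-- Block index of a position `x` with respect to the composition `n`. -/
def blkIdx {k : ℕ} (n : Fin k → ℕ) (x : ℕ) : ℕ :=
  ((Finset.range k).filter (fun j => psum n (j + 1) ≤ x)).card

/-- The part (among `1, …, t`) to which the position `x` is sent: the value of `f` on the
block of `x`. -/
def partKey {k t : ℕ} (n : Fin k → ℕ) (f : Fin k → Fin t) (x : ℕ) : ℕ :=
  if h : blkIdx n x < k then (f ⟨blkIdx n x, h⟩ : ℕ) else 0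

/-- The permutation attached to an ordered partition `(A_1, …, A_t)` of `[1,k]` (encoded by
`f : Fin k → Fin t`, `A_i = f⁻¹(i)`): the unique permutation that is order preserving from
`⋃_{j ∈ A_i} [ν_{j-1}+1, ν_j]` onto `[μ_{i-1}+1, μ_i]` for every `i`.  It is the inverse of
the stable sorting permutation sorting positions by the part of their block. -/
noncomputable def phi (N : ℕ) {k t : ℕ} (n : Fin k → ℕ) (f : Fin k → Fin t) :
    Equiv.Perm (Fin N) :=
  (Tuple.sort (fun x : Fin N => partKey n f (x : ℕ)))⁻¹

/-- Membership of the position `x` in `⋃_{j ∈ A_i} [ν_{j-1}, ν_j)` (0-indexed). -/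
def inPart {N k t : ℕ} (n : Fin k → ℕ) (f : Fin k → Fin t) (i : Fin t) (x : Fin N) : Prop :=
  ∃ j : Fin k, f j = i ∧ psum n (j : ℕ) ≤ (x : ℕ) ∧ (x : ℕ) < psum n ((j : ℕ) + 1)

open Finset

section Blocks

variable {k : ℕ} (n : Fin k → ℕ)

lemma psum_succ {j : ℕ} (h : j < k) : psum n (j + 1) = psum n j + n ⟨j, h⟩ := by
  simp [psum, sum_range_succ, h]

lemma psum_mono : Monotone (psum n) := fun _ _ hab =>
  sum_le_sum_of_subset (range_subset_range.2 hab)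

lemma psum_self : psum n k = ∑ j, n j := by
  simp [psum, ← Fin.sum_univ_eq_sum_range]

lemma blkIdx_eq {x j : ℕ} (hj : j < k) (h1 : psum n j ≤ x) (h2 : x < psum n (j + 1)) :
    blkIdx n x = j := by
  have : {j' ∈ range k | psum n (j' + 1) ≤ x} = range j := by
    ext j'
    simp only [mem_filter, mem_range]
    constructor
    · rintro ⟨-, hle⟩
      by_contra! hjj'
      exact (hle.trans_lt' (h2.trans_le (psum_mono n (by omega)))).false
    · intro hj'
      exact ⟨hj'.trans hj, (psum_mono n (by omega)).trans h1⟩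
  rw [blkIdx, this, card_range]

lemma exists_mem_block {x : ℕ} (hx : x < psum n k) :
    ∃ j : Fin k, psum n j ≤ x ∧ x < psum n (j + 1) := by
  obtain ⟨j, hj_eq⟩ : ∃ j, Nat.findGreatest (fun j => psum n j ≤ x) k = j := ⟨_, rfl⟩
  have hj : psum n j ≤ x :=
    hj_eq ▸ Nat.findGreatest_spec (P := fun j => psum n j ≤ x) (Nat.zero_le k) (by simp [psum])
  have hjk : j < k := (hj_eq ▸ Nat.findGreatest_le k).lt_of_ne (by rintro rfl; omega)
  have hnext : ¬psum n (j + 1) ≤ x :=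
    Nat.findGreatest_is_greatest (P := fun j => psum n j ≤ x) (by omega) hjk
  exact ⟨⟨j, hjk⟩, hj, not_le.1 hnext⟩

lemma blkIdx_eq_iff {x : ℕ} (hx : x < psum n k) (j : Fin k) :
    blkIdx n x = j ↔ psum n j ≤ x ∧ x < psum n (j + 1) := by
  refine ⟨fun h => ?_, fun h => blkIdx_eq n j.isLt h.1 h.2⟩
  obtain ⟨j', h1, h2⟩ := exists_mem_block n hx
  obtain rfl : j = j' := Fin.ext (h.symm.trans (blkIdx_eq n j'.isLt h1 h2))
  exact ⟨h1, h2⟩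

lemma blkIdx_mono : Monotone (blkIdx n) := fun _ _ hab =>
  card_le_card fun _ hj => by
    simp only [mem_filter] at hj ⊢
    exact ⟨hj.1, hj.2.trans hab⟩

lemma partKey_eq_of_mem {t : ℕ} (f : Fin k → Fin t) (j : Fin k) {x : ℕ}
    (h1 : psum n j ≤ x) (h2 : x < psum n (j + 1)) : partKey n f x = f j := by
  simp [partKey, blkIdx_eq n j.isLt h1 h2]

end Blocks

lemma card_filter_val_mem_Ico {N a b : ℕ} (hb : b ≤ N) :
    #{x : Fin N | a ≤ (x : ℕ) ∧ (x : ℕ) < b} = b - a := by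
  rw [← Nat.card_Ico, ← card_image_of_injective _ Fin.val_injective]
  congr 1
  ext c
  simp only [mem_image, mem_filter, mem_univ, true_and, mem_Ico]
  exact ⟨fun ⟨x, hx, hxc⟩ => hxc ▸ hx, fun hc => ⟨⟨c, by omega⟩, hc, rfl⟩⟩

section Counting

variable {N k : ℕ} {n : Fin k → ℕ}

lemma val_lt_psum (hns : psum n k = N) (x : Fin N) : (x : ℕ) < psum n k := hns ▸ x.isLt

lemma card_filter_blkIdx (hns : psum n k = N) (j : Fin k) :
    #{x : Fin N | blkIdx n x = j} = n j := by
  have : #{x : Fin N | blkIdx n x = j} =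
      #{x : Fin N | psum n j ≤ (x : ℕ) ∧ (x : ℕ) < psum n (j + 1)} :=
    congrArg card (filter_congr fun x _ => blkIdx_eq_iff n (val_lt_psum hns x) j)
  rw [this, card_filter_val_mem_Ico (hns ▸ psum_mono n j.isLt), psum_succ n j.isLt]
  simp

lemma card_filter_partKey (hns : psum n k = N) {t : ℕ} (f : Fin k → Fin t) (i : Fin t) :
    #{x : Fin N | partKey n f x = i} = ∑ j with f j = i, n j := by
  have : ({x : Fin N | partKey n f x = i} : Finset (Fin N)) =
      ({j | f j = i} : Finset (Fin k)).biUnion fun j => {x : Fin N | blkIdx n x = j} := by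
    ext x
    obtain ⟨j, h1, h2⟩ := exists_mem_block n (val_lt_psum hns x)
    simp [partKey_eq_of_mem n f j h1 h2, blkIdx_eq n j.isLt h1 h2, Fin.val_inj]
  rw [this, card_biUnion]
  · exact sum_congr rfl fun j _ => card_filter_blkIdx hns j
  · intro j₁ _ j₂ _ hne
    exact disjoint_filter.2 fun x _ h₁ h₂ => hne (Fin.ext (h₁.symm.trans h₂))

end Counting

lemma card_filter_lt_eq_psum {ι : Type*} [Fintype ι] {t : ℕ} (key : ι → ℕ) (m : Fin t → ℕ)
    (hkey : ∀ i : Fin t, #{x | key x = i} = m i) {c : ℕ} (hc : c ≤ t) :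
    #{x | key x < c} = psum m c := by
  induction c with
  | zero => simp [psum]
  | succ c ih =>
    classical
    have hsplit : #{x | key x < c + 1} = #{x | key x < c} + #{x | key x = c} := by
      rw [← card_union_of_disjoint (disjoint_filter.2 fun _ _ h h' => h.ne h'), ← filter_or]
      congr 1
      ext
      simp only [mem_filter, mem_univ, true_and]
      omega
    rw [hsplit, ih (by omega), hkey ⟨c, hc⟩, psum_succ m hc]

section Sorting

open Tuple

variable {N : ℕ} {α : Type*} [LinearOrder α] (key : Fin N → α)

lemma sort_lt_sort_of_key_eq {x y : Fin N} (hxy : x < y)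
    (h : key (sort key x) = key (sort key y)) : sort key x < sort key y :=
  (eq_sort_iff.1 rfl).2 x y hxy h

lemma sort_inv_lt_sort_inv_of_key_eq {x y : Fin N} (hxy : x < y) (h : key x = key y) :
    (sort key)⁻¹ x < (sort key)⁻¹ y := by
  refine lt_of_le_of_ne (not_lt.1 fun hyx => hxy.not_gt ?_) ((sort key)⁻¹.injective.ne hxy.ne)
  simpa using sort_lt_sort_of_key_eq key hyx (by simpa using h.symm)

lemma key_sort_lt_iff (c : α) (y : Fin N) :
    key (sort key y) < c ↔ (y : ℕ) < #{x | key x < c} := by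
  rw [← (card_equiv (sort key) (by simp) : #{y | key (sort key y) < c} = _)]
  exact (lt_card_lt_iff_apply_lt_of_monotone (monotone_sort key)).symm

lemma key_sort_eq_iff {t : ℕ} (key : Fin N → ℕ) (m : Fin t → ℕ)
    (hkey : ∀ i : Fin t, #{x | key x = i} = m i) (i : Fin t) (y : Fin N) :
    key (sort key y) = i ↔ psum m i ≤ y ∧ y < psum m (i + 1) := by
  have hlt : ∀ c ≤ t, key (sort key y) < c ↔ (y : ℕ) < psum m c := fun c hc => by
    rw [key_sort_lt_iff, card_filter_lt_eq_psum key m hkey hc]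
  rw [← not_lt, ← hlt i i.isLt.le, ← hlt (i + 1) i.isLt]
  omega

end Sorting

section Phi

variable {N k t : ℕ} {n : Fin k → ℕ} {m : Fin t → ℕ}

lemma phi_lt_phi (f : Fin k → Fin t) {x y : Fin N} (hxy : x < y)
    (h : partKey n f x = partKey n f y) : phi N n f x < phi N n f y :=
  sort_inv_lt_sort_inv_of_key_eq _ hxy h

lemma inPart_iff (hns : psum n k = N) (f : Fin k → Fin t) (i : Fin t) (x : Fin N) :
    inPart n f i x ↔ partKey n f x = i := by
  refine ⟨fun ⟨j, hj, h1, h2⟩ => hj ▸ partKey_eq_of_mem n f j h1 h2, fun h => ?_⟩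
  obtain ⟨j, h1, h2⟩ := exists_mem_block n (val_lt_psum hns x)
  rw [partKey_eq_of_mem n f j h1 h2] at h
  exact ⟨j, Fin.ext h, h1, h2⟩

lemma phi_mem_block_iff (hns : psum n k = N) {f : Fin k → Fin t}
    (hf : ∀ i, m i = ∑ j with f j = i, n j) (i : Fin t) (x : Fin N) :
    (psum m i ≤ phi N n f x ∧ (phi N n f x : ℕ) < psum m (i + 1)) ↔ partKey n f x = i := by
  have hkey (i : Fin t) : #{x : Fin N | partKey n f x = i} = m i :=
    (card_filter_partKey hns f i).trans (hf i).symm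
  rw [← key_sort_eq_iff _ m hkey i]
  simp [phi]

lemma phi_symm_lt_phi_symm (hns : psum n k = N) {f : Fin k → Fin t}
    (hf : ∀ i, m i = ∑ j with f j = i, n j) (i : Fin t) {x y : Fin N}
    (h1 : psum m i ≤ x) (hxy : x < y) (h2 : (y : ℕ) < psum m (i + 1)) :
    (phi N n f).symm x < (phi N n f).symm y := by
  have hx := (phi_mem_block_iff hns hf i ((phi N n f).symm x)).1 (by simpa using ⟨h1, (Fin.lt_def.1 hxy).trans h2⟩)
  have hy := (phi_mem_block_iff hns hf i ((phi N n f).symm y)).1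
    (by simpa using ⟨h1.trans hxy.le, h2⟩)
  simp only [phi, Equiv.Perm.inv_def, Equiv.symm_symm] at hx hy ⊢
  exact sort_lt_sort_of_key_eq _ hxy (hx.trans hy.symm)

lemma phi_injOn (hns : psum n k = N) (hn : ∀ j, 0 < n j) :
    Set.InjOn (phi N n) {f : Fin k → Fin t | ∀ i, m i = ∑ j with f j = i, n j} := by
  intro f hf g hg hfg
  funext j
  have hj : psum n j < psum n (j + 1) := by
    rw [psum_succ n j.isLt]
    exact Nat.lt_add_of_pos_right (hn _)
  let x : Fin N := ⟨psum n j, hns ▸ hj.trans_le (psum_mono n j.isLt)⟩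
  have hfx := (phi_mem_block_iff hns hf (f j) x).2 (partKey_eq_of_mem n f j le_rfl hj)
  have hgx := (phi_mem_block_iff hns hg (g j) x).2 (partKey_eq_of_mem n g j le_rfl hj)
  rw [hfg] at hfx
  exact Fin.ext ((blkIdx_eq m (f j).isLt hfx.1 hfx.2).symm.trans
    (blkIdx_eq m (g j).isLt hgx.1 hgx.2))

lemma partKey_eq_blkIdx_apply (hns : psum n k = N) {w : Equiv.Perm (Fin N)} {F : Fin k → Fin t}
    (hF : ∀ (j : Fin k) (x : Fin N), psum n j ≤ x → x < psum n (j + 1) →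
      psum m (F j) ≤ w x ∧ (w x : ℕ) < psum m (F j + 1)) (x : Fin N) :
    partKey n F x = blkIdx m (w x) := by
  obtain ⟨j, h1, h2⟩ := exists_mem_block n (val_lt_psum hns x)
  obtain ⟨h1', h2'⟩ := hF j x h1 h2
  rw [partKey_eq_of_mem n F j h1 h2, blkIdx_eq m (F j).isLt h1' h2']

lemma sum_filter_eq_of_mapsTo_blocks (hns : psum n k = N) (hms : psum m t = N)
    {w : Equiv.Perm (Fin N)} {F : Fin k → Fin t}
    (hF : ∀ (j : Fin k) (x : Fin N), psum n j ≤ x → x < psum n (j + 1) →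
      psum m (F j) ≤ w x ∧ (w x : ℕ) < psum m (F j + 1)) (i : Fin t) :
    m i = ∑ j with F j = i, n j := by
  rw [← card_filter_partKey hns F i, ← card_filter_blkIdx hms i]
  exact (card_equiv w fun x => by simp [partKey_eq_blkIdx_apply hns hF x]).symm

lemma phi_eq_of_mapsTo_blocks (hns : psum n k = N) (hms : psum m t = N)
    {w : Equiv.Perm (Fin N)} {F : Fin k → Fin t}
    (hF : ∀ (j : Fin k) (x : Fin N), psum n j ≤ x → x < psum n (j + 1) →
      psum m (F j) ≤ w x ∧ (w x : ℕ) < psum m (F j + 1))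
    (hw : ∀ i : Fin t, ∀ x y : Fin N, psum m i ≤ x → x < y → (y : ℕ) < psum m (i + 1) →
      w.symm x < w.symm y) :
    phi N n F = w := by
  have hkey (y : Fin N) : partKey n F (w⁻¹ y) = blkIdx m y := by
    simpa using partKey_eq_blkIdx_apply hns hF (w⁻¹ y)
  have hsort : w⁻¹ = Tuple.sort (fun x : Fin N => partKey n F x) := by
    refine Tuple.eq_sort_iff.2 ⟨fun a b hab => ?_, fun a b hab hab' => ?_⟩
    · simpa only [Function.comp_apply, hkey] using blkIdx_mono m hab
    · simp only [hkey] at hab'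
      obtain ⟨i, h1, h2⟩ := exists_mem_block m (val_lt_psum hms a)
      have hb := (blkIdx_eq_iff m (val_lt_psum hms b) i).1 (hab' ▸ blkIdx_eq m i.isLt h1 h2)
      exact hw i a b h1 hab hb.2
  rw [phi, ← hsort, inv_inv]

end Phi
theorem stmt11_general (N k t : ℕ) (n : Fin k → ℕ) (m : Fin t → ℕ)
    (hn : ∀ j, 0 < n j)
    (hns : ∑ j, n j = N) (hms : ∑ i, m i = N) :
    (∀ f : Fin k → Fin t,
      (∀ i : Fin t, m i = ∑ j ∈ Finset.univ.filter (fun j => f j = i), n j) →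
      ∀ i : Fin t,
        (∀ x y : Fin N, inPart n f i x → inPart n f i y → x < y → phi N n f x < phi N n f y) ∧
        (∀ y : Fin N, (psum m (i : ℕ) ≤ (y : ℕ) ∧ (y : ℕ) < psum m ((i : ℕ) + 1)) ↔
          ∃ x : Fin N, inPart n f i x ∧ phi N n f x = y)) ∧
    Set.BijOn (phi N n)
      { f | ∀ i : Fin t, m i = ∑ j ∈ Finset.univ.filter (fun j => f j = i), n j }
      { w : Equiv.Perm (Fin N) |
        (∀ j : Fin k, ∀ x y : Fin N, psum n (j : ℕ) ≤ (x : ℕ) → x < y →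
          (y : ℕ) < psum n ((j : ℕ) + 1) → w x < w y) ∧
        (∀ i : Fin t, ∀ x y : Fin N, psum m (i : ℕ) ≤ (x : ℕ) → x < y →
          (y : ℕ) < psum m ((i : ℕ) + 1) → w.symm x < w.symm y) ∧
        (∀ j : Fin k, ∃ i : Fin t, ∀ x : Fin N, psum n (j : ℕ) ≤ (x : ℕ) →
          (x : ℕ) < psum n ((j : ℕ) + 1) →
            psum m (i : ℕ) ≤ (w x : ℕ) ∧ (w x : ℕ) < psum m ((i : ℕ) + 1)) } := by
  rw [← psum_self] at hns hms
  refine ⟨fun f hf i => ⟨fun x y hx hy hxy => ?_, fun y => ⟨fun hy => ?_, ?_⟩⟩,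
    fun f hf => ⟨fun j x y h1 hxy h2 => ?_, fun i _ _ => phi_symm_lt_phi_symm hns hf i,
      fun j => ⟨f j, fun x h1 h2 => (phi_mem_block_iff hns hf _ x).2 (partKey_eq_of_mem n f j h1 h2)⟩⟩,
    phi_injOn hns hn, ?_⟩
  · rw [inPart_iff hns] at hx hy
    exact phi_lt_phi f hxy (hx.trans hy.symm)
  · refine ⟨(phi N n f).symm y, ?_, by simp⟩
    rw [inPart_iff hns, ← phi_mem_block_iff hns hf]
    simpa using hy
  · rintro ⟨x, hx, rfl⟩
    exact (phi_mem_block_iff hns hf i x).2 ((inPart_iff hns f i x).1 hx)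
  · have hxy' : (x : ℕ) < y := hxy
    refine phi_lt_phi f hxy ?_
    rw [partKey_eq_of_mem n f j h1 (by omega), partKey_eq_of_mem n f j (by omega) h2]
  · rintro w ⟨-, hw, hwF⟩
    choose F hF using hwF
    exact ⟨F, sum_filter_eq_of_mapsTo_blocks hns hms hF, phi_eq_of_mapsTo_blocks hns hms hF hw⟩

/-- Let `α = (n_1,…,n_k)` and `β = (m_1,…,m_t)` be compositions of `N`.
The set `S` of permutations `w` of `[1,N]` such that (i) `w` is order preserving on each
interval `[ν_{j-1}+1, ν_j]`, (ii) `w⁻¹` is order preserving on each `[μ_{i-1}+1, μ_i]`, and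
(iii) each `w([ν_{j-1}+1, ν_j])` is contained in some `[μ_{i-1}+1, μ_i]`, is in bijection
with the set of ordered partitions `(A_1,…,A_t)` of `[1,k]` (encoded by `f : Fin k → Fin t`)
with `m_i = ∑_{j ∈ A_i} n_j`; the element of `S` attached to `(A_1,…,A_t)` is the unique
permutation order preserving from `⋃_{j ∈ A_i} [ν_{j-1}+1, ν_j]` onto `[μ_{i-1}+1, μ_i]`
for every `i`. -/
theorem stmt11 (N k t : ℕ) (n : Fin k → ℕ) (m : Fin t → ℕ)
    (hn : ∀ j, 0 < n j) (hm : ∀ i, 0 < m i)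
    (hns : ∑ j, n j = N) (hms : ∑ i, m i = N) :
    (∀ f : Fin k → Fin t,
      (∀ i : Fin t, m i = ∑ j ∈ Finset.univ.filter (fun j => f j = i), n j) →
      ∀ i : Fin t,
        (∀ x y : Fin N, inPart n f i x → inPart n f i y → x < y → phi N n f x < phi N n f y) ∧
        (∀ y : Fin N, (psum m (i : ℕ) ≤ (y : ℕ) ∧ (y : ℕ) < psum m ((i : ℕ) + 1)) ↔
          ∃ x : Fin N, inPart n f i x ∧ phi N n f x = y)) ∧
    Set.BijOn (phi N n)
      { f | ∀ i : Fin t, m i = ∑ j ∈ Finset.univ.filter (fun j => f j = i), n j }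
      { w : Equiv.Perm (Fin N) |
        (∀ j : Fin k, ∀ x y : Fin N, psum n (j : ℕ) ≤ (x : ℕ) → x < y →
          (y : ℕ) < psum n ((j : ℕ) + 1) → w x < w y) ∧
        (∀ i : Fin t, ∀ x y : Fin N, psum m (i : ℕ) ≤ (x : ℕ) → x < y →
          (y : ℕ) < psum m ((i : ℕ) + 1) → w.symm x < w.symm y) ∧
        (∀ j : Fin k, ∃ i : Fin t, ∀ x : Fin N, psum n (j : ℕ) ≤ (x : ℕ) →
          (x : ℕ) < psum n ((j : ℕ) + 1) →
            psum m (i : ℕ) ≤ (w x : ℕ) ∧ (w x : ℕ) < psum m ((i : ℕ) + 1)) } :=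
  stmt11_general N k t n m hn hns hms

end Stmt11
end

section
/- Let N ≥ 1, let (m_1,…,m_t) be a composition of N with partial sums κ_0 = 0, κ_s = m_1+⋯+m_s, and let (n_1,…,n_k; r) be a tuple of nonnegative integers with n_1+⋯+n_k+r = N and partial sums ν_0 = 0, ν_i = n_1+⋯+n_i. Write C_s = [κ_{s−1}+1, κ_s] for s ∈ [1,t], C'_i = [ν_{i−1}+1, ν_i] for i ∈ [1,k] and C'_0 = [ν_k+1, N]. Consider the set S of signed permutations w ∈ 𝒲_N such that: (i) w maps every vector e_x − e_{x+1} with x, x+1 in a common interval C_s to a positive root; (ii) w⁻¹ maps every vector e_x − e_{x+1} with x, x+1 in a common interval C'_i (i ∈ [1,k]), every e_x − e_{x+1} with x, x+1 ∈ C'_0, and (if r ≥ 1) the vector 2e_N, to a positive root; (iii) w maps every vector e_x − e_y with x ≠ y in a common interval C_s to a vector ±(e_u − e_v) with u, v in a common interval C'_i (i ∈ [1,k]) or to a vector of the form ±e_u ± e_v with u, v ∈ C'_0. Then S is in bijection with the set of partitions 𝒟 = (D_1, E_1, …, D_k, E_k, D_0) of [1,t] into 2k+1 (possibly empty) subsets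 satisfying n_i = Σ_{j ∈ D_i ∪ E_i} m_j for i ∈ [1,k] and r = Σ_{j ∈ D_0} m_j. The element w_𝒟 ∈ S attached to 𝒟 is the unique signed permutation determined as follows: writing D_i = {x_{i,1} < ⋯ < x_{i,d_i}} and E_i = {y_{i,e_i} < ⋯ < y_{i,1}}, and tiling C'_i by consecutive subintervals of lengths m_{x_{i,1}},…,m_{x_{i,d_i}}, m_{y_{i,1}},…,m_{y_{i,e_i}} in this order, w_𝒟 maps C_{x_{i,a}} order-preservingly onto the a-th subinterval with w e_s = +e_{s'}, maps C_{y_{i,b}} order-reversingly onto the (d_i+b)-th subinterval with w e_s = −e_{s'}, and, writing D_0 = {z_1 < ⋯ < z_{d_0}}, maps C_{z_1},…,C_{z_{d_0}} order-preservingly with sign + consecutively onto C'_0. -/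
/-!
Order the signed unit vectors as `e_1 < ⋯ < e_N < -e_N < ⋯ < -e_1` (`signedRank`). For `a ≠ b`,
`±e_a ∓ e_b` is a positive root exactly when its first term precedes its second, so (i) and (ii)
say that `x ↦ w e_x` is increasing on each block `C_s` and `u ↦ w⁻¹ e_u` is increasing on each
interval `C'_i`. Condition (iii) sends each block, with a single sign, into a single interval, and
the long root `2 e_N` excludes the sign `-` on `C'_0`; recording interval and sign of each block
gives the partition `𝒟`. Inside each `C'_i` the preimages are then listed in signed order, which is
the order `keyD` prescribes, so `w = w_𝒟`. Conversely, a counting argument shows that `w_𝒟` puts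
each block into the interval its label prescribes.
-/

namespace Stmt12

/-- Partial sums `ν_j = n 0 + ⋯ + n (j-1)` (the tuple is extended by zero beyond `k`). -/
def psum {k : ℕ} (n : Fin k → ℕ) (j : ℕ) : ℕ :=
  ∑ i ∈ Finset.range j, if h : i < k then n ⟨i, h⟩ else 0

/-- Block index of a position `x` with respect to the composition `n`. -/
def blkIdx {k : ℕ} (n : Fin k → ℕ) (x : ℕ) : ℕ :=
  ((Finset.range k).filter (fun j => psum n (j + 1) ≤ x)).card

/-- A positive root of type `C_N` in `ℝ^N`: `e_i - e_j` (`i < j`) or `e_i + e_j` (`i ≤ j`). -/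
def IsPosRoot {N : ℕ} (v : Fin N → ℝ) : Prop :=
  (∃ i j : Fin N, i < j ∧ v = Pi.single i 1 - Pi.single j 1) ∨
  (∃ i j : Fin N, i ≤ j ∧ v = Pi.single i (1 : ℝ) + Pi.single j 1)

/-- The image `w e_i` of `e_i` under the signed permutation `w = τ𝔠`. -/
def wE {N : ℕ} (τ : Equiv.Perm (Fin N)) (c : Finset (Fin N)) (i : Fin N) : Fin N → ℝ :=
  (if i ∈ c then (-1 : ℝ) else 1) • (Pi.single (τ i) 1 : Fin N → ℝ)

/-- The image `w⁻¹ e_u` of `e_u` under the inverse of the signed permutation `w = τ𝔠`. -/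
def wInvE {N : ℕ} (τ : Equiv.Perm (Fin N)) (c : Finset (Fin N)) (u : Fin N) : Fin N → ℝ :=
  (if τ.symm u ∈ c then (-1 : ℝ) else 1) • (Pi.single (τ.symm u) 1 : Fin N → ℝ)

/-- The label of the position `x`: the pair `(i, e)` with `i ∈ Fin (k+1)` and `e : Bool`
recording the part (`D_{i+1}` if `e = false` and `i < k`, `E_{i+1}` if `e = true` and
`i < k`, `D_0` if `i = k`) to which the block `C_s` containing `x` belongs.  The partition
`𝒟 = (D_1, E_1, …, D_k, E_k, D_0)` of `[1,t]` is encoded by `c : Fin t → Fin (k+1) × Bool`. -/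
def labOf {t k : ℕ} (m : Fin t → ℕ) (c : Fin t → Fin (k + 1) × Bool) (x : ℕ) :
    Fin (k + 1) × Bool :=
  if h : blkIdx m x < t then c ⟨blkIdx m x, h⟩ else (Fin.last k, false)

/-- The sorting key realizing the explicit description of `w_𝒟`: positions are ranked by
(target block `i`; `D`-parts before `E`-parts; within the `D`-parts by block ascending and
position ascending; within the `E`-parts by block descending and position descending). -/
def keyD (N : ℕ) {t k : ℕ} (m : Fin t → ℕ) (c : Fin t → Fin (k + 1) × Bool) (x : Fin N) :
    ℕ :=
  ((((labOf m c (x : ℕ)).1 : ℕ) * 2 + (if (labOf m c (x : ℕ)).2 then 1 else 0)) * t +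
      (if (labOf m c (x : ℕ)).2 then t - 1 - blkIdx m (x : ℕ) else blkIdx m (x : ℕ))) * N +
    (if (labOf m c (x : ℕ)).2 then N - 1 - (x : ℕ) else (x : ℕ))

/-- The signed permutation `w_𝒟 = (τ_𝒟, 𝔠_𝒟)` attached to the partition `𝒟`:
`𝔠_𝒟` is the union of the blocks `C_s` with `s` in some `E_i`, and `τ_𝒟` is the inverse of
the stable sorting permutation for the key above; this realizes exactly the tiling
description of `w_𝒟` in the statement. -/
noncomputable def PhiD (N : ℕ) {t k : ℕ} (m : Fin t → ℕ)
    (c : Fin t → Fin (k + 1) × Bool) : Equiv.Perm (Fin N) × Finset (Fin N) :=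
  ((Tuple.sort (keyD N m c))⁻¹,
    Finset.univ.filter (fun x : Fin N => (labOf m c (x : ℕ)).2 = true))

open Finset

lemma mul_add_lt_mul_add_iff {T a a' b b' : ℕ} (hb : b < T) (hb' : b' < T) :
    a * T + b < a' * T + b' ↔ a < a' ∨ a = a' ∧ b < b' := by
  rcases lt_trichotomy a a' with h | rfl | h
  · have := Nat.mul_le_mul_right T (Nat.succ_le_of_lt h)
    rw [Nat.succ_mul] at this
    simp only [h, true_or, iff_true]
    omega
  · simp
  · have := Nat.mul_le_mul_right T (Nat.succ_le_of_lt h)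
    rw [Nat.succ_mul] at this
    simp only [h.not_gt, h.ne', false_or, false_and, iff_false]
    omega

lemma mul_add_lt_mul_of_lt {T a a' b : ℕ} (ha : a < a') (hb : b < T) : a * T + b < a' * T := by
  simpa using (mul_add_lt_mul_add_iff hb (b' := 0) (by omega)).2 (Or.inl ha)

lemma card_filter_le_val_lt {N a b : ℕ} (hb : b ≤ N) :
    #{u : Fin N | a ≤ (u : ℕ) ∧ (u : ℕ) < b} = b - a := by
  rw [← Nat.card_Ico, ← card_map Fin.valEmbedding]
  congr 1
  ext v
  simp only [mem_map, mem_filter, mem_univ, true_and, Fin.valEmbedding_apply, mem_Ico]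
  constructor
  · rintro ⟨u, hu, rfl⟩
    exact hu
  · intro hv
    exact ⟨⟨v, by omega⟩, hv, rfl⟩

lemma card_filter_comp_perm {N : ℕ} (σ : Equiv.Perm (Fin N)) (p : Fin N → Prop)
    [DecidablePred p] : #{x | p (σ x)} = #{u | p u} :=
  card_equiv σ (by simp)

lemma eq_of_monotone_of_card_fiber_eq {α : Type*} [LinearOrder α] [LocallyFiniteOrderBot α]
    {N : ℕ} {g h : Fin N → α} (hg : Monotone g) (hh : Monotone h)
    (hfib : ∀ a, #{x | g x = a} = #{x | h x = a}) : g = h := by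
  have hlt : ∀ a, #{x | g x < a} = #{x | h x < a} := fun a => by
    rw [card_eq_sum_card_fiberwise (f := g) (t := Iio a) (fun x hx => by simpa using hx),
      card_eq_sum_card_fiberwise (f := h) (t := Iio a) (fun x hx => by simpa using hx)]
    refine sum_congr rfl fun b hb => ?_
    have hba : b < a := mem_Iio.1 hb
    simp only [filter_filter]
    convert hfib b using 2 <;> ext x <;> simp only [mem_filter, mem_univ, true_and] <;>
      exact ⟨And.right, fun e => ⟨e ▸ hba, e⟩⟩
  funext x
  by_contra hne
  rcases lt_or_gt_of_ne hne with hx | hx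
  · have := (Tuple.lt_card_lt_iff_apply_lt_of_monotone hg (j := x)).2 hx
    rw [hlt] at this
    exact lt_irrefl _ ((Tuple.lt_card_lt_iff_apply_lt_of_monotone hh).1 this)
  · have := (Tuple.lt_card_lt_iff_apply_lt_of_monotone hh (j := x)).2 hx
    rw [← hlt] at this
    exact lt_irrefl _ ((Tuple.lt_card_lt_iff_apply_lt_of_monotone hg).1 this)

lemma strictMonoOn_of_consecutive_lt {N : ℕ} {β : Type*} [Preorder β] {f : Fin N → β}
    {s : Set (Fin N)} (hs : s.OrdConnected)
    (h : ∀ u v : Fin N, u ∈ s → v ∈ s → (v : ℕ) = u + 1 → f u < f v) : StrictMonoOn f s :=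
  strictMonoOn_of_lt_succ hs fun a ha has hsa => h a _ has hsa
    (Nat.covBy_iff_add_one_eq.1 (Fin.covBy_iff.1 (Order.covBy_succ_of_not_isMax ha))).symm

section Intervals

variable {k : ℕ} (n : Fin k → ℕ)

lemma psum_mono : Monotone (psum n) := fun _ _ h =>
  sum_le_sum_of_subset (range_subset_range.2 h)

lemma psum_succ {j : ℕ} (hj : j < k) : psum n (j + 1) = psum n j + n ⟨j, hj⟩ := by
  rw [psum, sum_range_succ, dif_pos hj]
  rfl

lemma psum_of_le {j : ℕ} (hj : k ≤ j) : psum n j = ∑ i, n i := by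
  rw [psum, ← sum_range_add_sum_Ico _ hj,
    sum_eq_zero (s := Ico k j) fun i hi => dif_neg (by simp only [mem_Ico] at hi; omega), add_zero,
    ← Fin.sum_univ_eq_sum_range]
  simp

lemma blkIdx_lt_iff {u j : ℕ} (hj : j ≤ k) : blkIdx n u < j ↔ u < psum n j := by
  unfold blkIdx
  constructor
  · intro h
    by_contra! h'
    have hsub : range j ⊆ (range k).filter (fun i => psum n (i + 1) ≤ u) := fun i hi => by
      simp only [mem_range, mem_filter] at hi ⊢
      exact ⟨by omega, (psum_mono n hi).trans h'⟩
    have := card_le_card hsub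
    rw [card_range] at this
    omega
  · intro h
    rcases Nat.eq_zero_or_pos j with rfl | hj0
    · simp [psum] at h
    have hsub : (range k).filter (fun i => psum n (i + 1) ≤ u) ⊆ range (j - 1) := fun i hi => by
      simp only [mem_range, mem_filter] at hi ⊢
      by_contra! hij
      have := psum_mono n (show j ≤ i + 1 by omega)
      omega
    have := card_le_card hsub
    rw [card_range] at this
    omega

lemma blkIdx_le (u : ℕ) : blkIdx n u ≤ k :=
  (card_filter_le _ _).trans (card_range k).le

lemma blkIdx_mono : Monotone (blkIdx n) := fun _ _ hab => card_le_card fun i hi => by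
  simp only [mem_filter] at hi ⊢
  exact ⟨hi.1, hi.2.trans hab⟩

lemma blkIdx_eq_iff {u j : ℕ} (hj : j < k) :
    blkIdx n u = j ↔ psum n j ≤ u ∧ u < psum n (j + 1) := by
  have h1 := blkIdx_lt_iff n (u := u) hj.le
  have h2 := blkIdx_lt_iff n (u := u) (show j + 1 ≤ k from hj)
  omega

/-- The index `i` of the interval `C'_i` containing the position `u`, where `C'_0` has index
`Fin.last k`. -/
def levelOf (u : ℕ) : Fin (k + 1) := ⟨blkIdx n u, Nat.lt_succ_of_le (blkIdx_le n u)⟩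

lemma levelOf_mono : Monotone (levelOf n) := fun _ _ h => Fin.mk_le_mk.2 (blkIdx_mono n h)

lemma levelOf_eq_castSucc_iff {u : ℕ} (i : Fin k) :
    levelOf n u = i.castSucc ↔ psum n i ≤ u ∧ u < psum n (i + 1) := by
  rw [← blkIdx_eq_iff n i.isLt, levelOf, Fin.ext_iff]
  rfl

lemma levelOf_eq_last_iff {u : ℕ} : levelOf n u = Fin.last k ↔ ∑ i, n i ≤ u := by
  have h := blkIdx_lt_iff n (u := u) le_rfl
  rw [psum_of_le n le_rfl] at h
  have := blkIdx_le n u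
  simp only [levelOf, Fin.ext_iff, Fin.val_last]
  omega

lemma card_levelOf_eq {N r : ℕ} (hnr : ∑ i, n i + r = N) (j : Fin (k + 1)) :
    #{u : Fin N | levelOf n u = j} = Fin.snoc (α := fun _ => ℕ) n r j := by
  induction j using Fin.lastCases with
  | last =>
    rw [Fin.snoc_last, ← show N - ∑ i, n i = r by omega,
      ← card_filter_le_val_lt (N := N) le_rfl]
    congr 1
    ext u
    simp [levelOf_eq_last_iff]
  | cast i =>
    have hle : psum n (i + 1) ≤ N := by
      have := psum_mono n (show (i : ℕ) + 1 ≤ k from i.isLt)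
      rw [psum_of_le n le_rfl] at this
      omega
    simp only [levelOf_eq_castSucc_iff, Fin.snoc_castSucc]
    rw [card_filter_le_val_lt hle, psum_succ n i.isLt]
    simp

end Intervals

section Blocks

variable {N t : ℕ} {m : Fin t → ℕ}

def blockOf (hms : ∑ s, m s = N) (x : Fin N) : Fin t :=
  ⟨blkIdx m x, (blkIdx_lt_iff m le_rfl).2 (by rw [psum_of_le m le_rfl, hms]; exact x.isLt)⟩

lemma blockOf_eq_iff (hms : ∑ s, m s = N) {x : Fin N} {s : Fin t} :
    blockOf hms x = s ↔ psum m s ≤ x ∧ (x : ℕ) < psum m (s + 1) := by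
  rw [← blkIdx_eq_iff m s.isLt]
  exact Fin.ext_iff

lemma labOf_eq {k : ℕ} (hms : ∑ s, m s = N) (c : Fin t → Fin (k + 1) × Bool) (x : Fin N) :
    labOf m c x = c (blockOf hms x) :=
  dif_pos (blockOf hms x).isLt

lemma card_filter_blockOf (hms : ∑ s, m s = N) (Q : Fin t → Prop) [DecidablePred Q] :
    #{x : Fin N | Q (blockOf hms x)} = ∑ s with Q s, m s := by
  rw [card_eq_sum_card_fiberwise (f := blockOf hms) (t := univ.filter Q)
    (fun x hx => by simpa using hx)]
  refine sum_congr rfl fun s hs => ?_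
  have hle : psum m (s + 1) ≤ N := by
    rw [← hms, ← psum_of_le m le_rfl]
    exact psum_mono m s.isLt
  rw [← show psum m (s + 1) - psum m s = m s by rw [psum_succ m s.isLt]; simp,
    ← card_filter_le_val_lt hle]
  congr 1
  ext x
  simp only [mem_filter, mem_univ, true_and, ← blockOf_eq_iff hms]
  exact ⟨And.right, fun e => ⟨e ▸ (mem_filter.1 hs).2, e⟩⟩

lemma card_labOf_fst_eq {k : ℕ} (hms : ∑ s, m s = N) (c : Fin t → Fin (k + 1) × Bool)
    (j : Fin (k + 1)) : #{x : Fin N | (labOf m c x).1 = j} = ∑ s with (c s).1 = j, m s := by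
  simp only [labOf_eq hms]
  exact card_filter_blockOf hms (fun s => (c s).1 = j)

lemma psum_lt_of_pos (hm : ∀ s, 0 < m s) (hms : ∑ s, m s = N) (s : Fin t) : psum m s < N := by
  have := psum_mono m (show (s : ℕ) + 1 ≤ t from s.isLt)
  rw [psum_of_le m le_rfl, hms, psum_succ m s.isLt, Fin.eta] at this
  have := hm s
  omega

lemma blockOf_psum (hm : ∀ s, 0 < m s) (hms : ∑ s, m s = N) (s : Fin t) :
    blockOf hms ⟨psum m s, psum_lt_of_pos hm hms s⟩ = s := by
  rw [blockOf_eq_iff, psum_succ m s.isLt]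
  exact ⟨le_rfl, by simpa using hm s⟩

end Blocks

section Roots

variable {N : ℕ}

/-- The position of `±e_a`, with sign `-` iff `p`, in the order
`e_0 < e_1 < ⋯ < e_{N-1} < -e_{N-1} < ⋯ < -e_0` (for `a < N`). -/
def signedRank (N : ℕ) (p : Prop) [Decidable p] (a : ℕ) : ℕ := if p then 2 * N - a else a

lemma le_signedRank_iff {p : Prop} [Decidable p] {a : ℕ} (ha : a < N) :
    N ≤ signedRank N p a ↔ p := by
  unfold signedRank
  split_ifs with hp <;> simp only [hp, iff_true, iff_false, not_le] <;> omega

lemma eq_of_signedRank_eq {p q : Prop} [Decidable p] [Decidable q] {a b : ℕ} (ha : a < N)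
    (hb : b < N) (h : signedRank N p a = signedRank N q b) : a = b := by
  unfold signedRank at h
  split_ifs at h <;> omega

lemma isPosRoot_sign_sub_sign_iff {a b : Fin N} (hab : a ≠ b) (p q : Prop) [Decidable p]
    [Decidable q] :
    IsPosRoot ((if p then (-1 : ℝ) else 1) • (Pi.single a 1 : Fin N → ℝ) -
        (if q then (-1 : ℝ) else 1) • Pi.single b 1) ↔
      signedRank N p a < signedRank N q b := by
  have hab' : (a : ℕ) ≠ b := Fin.val_ne_of_ne hab
  have := a.isLt
  have := b.isLt
  constructor
  · rintro (⟨i, j, hij, hV⟩ | ⟨i, j, -, hV⟩)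
    · have ha := congrFun hV a
      have hb := congrFun hV b
      have hij' : (i : ℕ) < j := hij
      simp only [Pi.sub_apply, Pi.smul_apply, Pi.single_apply, smul_eq_mul, hab, hab.symm,
        if_true, if_false, mul_one, mul_zero, sub_zero, zero_sub] at ha hb
      unfold signedRank
      split_ifs at ha hb ⊢ <;> subst_vars <;> first | omega | (exfalso; linarith)
    · have ha := congrFun hV a
      have hb := congrFun hV b
      simp only [Pi.sub_apply, Pi.add_apply, Pi.smul_apply, Pi.single_apply, smul_eq_mul, hab,
        hab.symm, if_true, if_false, mul_one, mul_zero, sub_zero, zero_sub] at ha hb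
      unfold signedRank
      split_ifs at ha hb ⊢ <;> first | omega | (exfalso; linarith)
  · unfold signedRank
    split_ifs with hp hq hq
    · intro h
      exact Or.inl ⟨b, a, Fin.lt_def.2 (by omega), by simp only [neg_smul, one_smul]; abel⟩
    · omega
    · intro _
      simp only [neg_smul, one_smul, sub_neg_eq_add]
      rcases le_total a b with h | h
      · exact Or.inr ⟨a, b, h, rfl⟩
      · exact Or.inr ⟨b, a, h, add_comm _ _⟩
    · intro h
      exact Or.inl ⟨a, b, Fin.lt_def.2 h, by simp only [one_smul]⟩

lemma isPosRoot_wE_sub_wE_iff {τ : Equiv.Perm (Fin N)} {C : Finset (Fin N)} {x y : Fin N}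
    (hxy : x ≠ y) :
    IsPosRoot (wE τ C x - wE τ C y) ↔
      signedRank N (x ∈ C) (τ x) < signedRank N (y ∈ C) (τ y) :=
  isPosRoot_sign_sub_sign_iff (τ.injective.ne hxy) _ _

lemma isPosRoot_wInvE_sub_wInvE_iff {τ : Equiv.Perm (Fin N)} {C : Finset (Fin N)}
    {u v : Fin N} (huv : u ≠ v) :
    IsPosRoot (wInvE τ C u - wInvE τ C v) ↔
      signedRank N (τ.symm u ∈ C) (τ.symm u) < signedRank N (τ.symm v ∈ C) (τ.symm v) :=
  isPosRoot_sign_sub_sign_iff (τ.symm.injective.ne huv) _ _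

lemma isPosRoot_two_smul_single (a : Fin N) :
    IsPosRoot ((2 : ℝ) • (Pi.single a 1 : Fin N → ℝ)) :=
  Or.inr ⟨a, a, le_rfl, two_smul _ _⟩

lemma not_isPosRoot_two_smul_neg_single (a : Fin N) :
    ¬ IsPosRoot ((2 : ℝ) • ((-1 : ℝ) • (Pi.single a 1 : Fin N → ℝ))) := by
  rintro (⟨i, j, -, h⟩ | ⟨i, j, -, h⟩) <;>
  · have := congrFun h a
    simp only [Pi.smul_apply, Pi.sub_apply, Pi.add_apply, Pi.single_apply, smul_eq_mul,
      if_true] at this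
    split_ifs at this <;> norm_num at this

lemma eq_or_eq_of_apply_ne_zero {u v z : Fin N} {V : Fin N → ℝ}
    (hV : V = Pi.single u 1 - Pi.single v 1 ∨ V = -(Pi.single u 1 - Pi.single v 1) ∨
      V = Pi.single u 1 + Pi.single v 1 ∨ V = -(Pi.single u 1 + Pi.single v 1))
    (hz : V z ≠ 0) : z = u ∨ z = v := by
  by_contra! h
  rcases hV with rfl | rfl | rfl | rfl <;> simp [h.1, h.2] at hz

lemma wE_sub_wE_apply_ne_zero {τ : Equiv.Perm (Fin N)} {C : Finset (Fin N)} {x y : Fin N}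
    (hxy : x ≠ y) : (wE τ C x - wE τ C y) (τ x) ≠ 0 ∧ (wE τ C x - wE τ C y) (τ y) ≠ 0 := by
  have hτ := τ.injective.ne hxy
  simp only [wE, Pi.sub_apply, Pi.smul_apply, Pi.single_apply, hτ, hτ.symm, if_true, if_false,
    smul_eq_mul, mul_one, mul_zero, sub_zero, zero_sub]
  constructor <;> split_ifs <;> norm_num

lemma sum_wE_sub_wE_eq_zero_iff {τ : Equiv.Perm (Fin N)} {C : Finset (Fin N)} {x y : Fin N} :
    ∑ z, (wE τ C x - wE τ C y) z = 0 ↔ (x ∈ C ↔ y ∈ C) := by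
  simp only [wE, sum_sub_distrib, Pi.sub_apply, Pi.smul_apply, smul_eq_mul, ← mul_sum,
    sum_pi_single', mem_univ, if_true, mul_one]
  split_ifs <;> norm_num <;> tauto

end Roots

section Conditions

variable {N t k : ℕ}

-- Conditions (i), (ii) (in three parts) and (iii) of the statement.
def IsRightReduced (m : Fin t → ℕ) (w : Equiv.Perm (Fin N) × Finset (Fin N)) : Prop :=
  ∀ s : Fin t, ∀ x y : Fin N, psum m (s : ℕ) ≤ (x : ℕ) → (y : ℕ) = (x : ℕ) + 1 →
    (y : ℕ) < psum m ((s : ℕ) + 1) → IsPosRoot (wE w.1 w.2 x - wE w.1 w.2 y)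

def IsLeftReducedOnBlocks (n : Fin k → ℕ) (w : Equiv.Perm (Fin N) × Finset (Fin N)) : Prop :=
  ∀ i : Fin k, ∀ x y : Fin N, psum n (i : ℕ) ≤ (x : ℕ) → (y : ℕ) = (x : ℕ) + 1 →
    (y : ℕ) < psum n ((i : ℕ) + 1) → IsPosRoot (wInvE w.1 w.2 x - wInvE w.1 w.2 y)

def IsLeftReducedOnTail (n : Fin k → ℕ) (w : Equiv.Perm (Fin N) × Finset (Fin N)) : Prop :=
  ∀ x y : Fin N, (∑ i, n i) ≤ (x : ℕ) → (y : ℕ) = (x : ℕ) + 1 →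
    IsPosRoot (wInvE w.1 w.2 x - wInvE w.1 w.2 y)

def IsLeftReducedAtLongRoot (hN : 1 ≤ N) (r : ℕ) (w : Equiv.Perm (Fin N) × Finset (Fin N)) :
    Prop :=
  1 ≤ r → IsPosRoot ((2 : ℝ) • wInvE w.1 w.2 ⟨N - 1, by omega⟩)

def ConjugatesIntoLevi (m : Fin t → ℕ) (n : Fin k → ℕ)
    (w : Equiv.Perm (Fin N) × Finset (Fin N)) : Prop :=
  ∀ s : Fin t, ∀ x y : Fin N,
    psum m (s : ℕ) ≤ (x : ℕ) → (x : ℕ) < psum m ((s : ℕ) + 1) →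
    psum m (s : ℕ) ≤ (y : ℕ) → (y : ℕ) < psum m ((s : ℕ) + 1) → x ≠ y →
    ((∃ i : Fin k, ∃ u v : Fin N,
        psum n (i : ℕ) ≤ (u : ℕ) ∧ (u : ℕ) < psum n ((i : ℕ) + 1) ∧
        psum n (i : ℕ) ≤ (v : ℕ) ∧ (v : ℕ) < psum n ((i : ℕ) + 1) ∧
        (wE w.1 w.2 x - wE w.1 w.2 y = (Pi.single u 1 : Fin N → ℝ) - Pi.single v 1 ∨
          wE w.1 w.2 x - wE w.1 w.2 y = -((Pi.single u 1 : Fin N → ℝ) - Pi.single v 1))) ∨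
      (∃ u v : Fin N, (∑ i, n i) ≤ (u : ℕ) ∧ (∑ i, n i) ≤ (v : ℕ) ∧
        (wE w.1 w.2 x - wE w.1 w.2 y = (Pi.single u 1 : Fin N → ℝ) + Pi.single v 1 ∨
          wE w.1 w.2 x - wE w.1 w.2 y = -((Pi.single u 1 : Fin N → ℝ) + Pi.single v 1) ∨
          wE w.1 w.2 x - wE w.1 w.2 y = (Pi.single u 1 : Fin N → ℝ) - Pi.single v 1 ∨
          wE w.1 w.2 x - wE w.1 w.2 y = -((Pi.single u 1 : Fin N → ℝ) - Pi.single v 1))))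

def IsAdmissible (m : Fin t → ℕ) (n : Fin k → ℕ) (r : ℕ)
    (c : Fin t → Fin (k + 1) × Bool) : Prop :=
  (∀ s, (c s).1 = Fin.last k → (c s).2 = false) ∧
  (∀ i : Fin k, n i = ∑ s ∈ Finset.univ.filter (fun s => (c s).1 = i.castSucc), m s) ∧
  r = ∑ s ∈ Finset.univ.filter (fun s => (c s).1 = Fin.last k), m s

lemma isAdmissible_iff {m : Fin t → ℕ} {n : Fin k → ℕ} {r : ℕ}
    {c : Fin t → Fin (k + 1) × Bool} :
    IsAdmissible m n r c ↔ (∀ s, (c s).1 = Fin.last k → (c s).2 = false) ∧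
      ∀ j, ∑ s with (c s).1 = j, m s = Fin.snoc (α := fun _ => ℕ) n r j := by
  refine and_congr_right fun _ => ⟨fun ⟨hn, hr⟩ j => ?_, fun h => ⟨fun i => ?_, ?_⟩⟩
  · induction j using Fin.lastCases with
    | last => simp [hr]
    | cast i => simp [hn]
  · simpa using (h i.castSucc).symm
  · simpa using (h (Fin.last k)).symm

end Conditions

section Forward

variable {N t k : ℕ} {m : Fin t → ℕ} {n : Fin k → ℕ} {r : ℕ} {c : Fin t → Fin (k + 1) × Bool}

lemma keyD_lt_keyD_iff (hms : ∑ s, m s = N) (x y : Fin N) :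
    keyD N m c x < keyD N m c y ↔ (labOf m c x).1 < (labOf m c y).1 ∨
      (labOf m c x).1 = (labOf m c y).1 ∧
        signedRank N ((labOf m c x).2 = true) x < signedRank N ((labOf m c y).2 = true) y := by
  set R : Fin N → ℕ := fun z =>
    ((if (labOf m c z).2 then 1 else 0) * t +
      (if (labOf m c z).2 then t - 1 - blkIdx m z else blkIdx m z)) * N +
    (if (labOf m c z).2 then N - 1 - z else z) with hR
  have hkey : ∀ z, keyD N m c z = ((labOf m c z).1 : ℕ) * (2 * t * N) + R z := fun z => by
    simp only [keyD, hR]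
    ring
  have hbounds : ∀ z : Fin N, blkIdx m z < t ∧ (z : ℕ) < N := fun z =>
    ⟨(blockOf hms z).isLt, z.isLt⟩
  have hRlt : ∀ z, R z < 2 * t * N := fun z => by
    obtain ⟨h1, h2⟩ := hbounds z
    exact mul_add_lt_mul_of_lt (by split_ifs <;> omega) (by split_ifs <;> omega)
  rw [hkey, hkey, mul_add_lt_mul_add_iff (hRlt x) (hRlt y), Fin.lt_def, Fin.ext_iff]
  refine or_congr Iff.rfl (and_congr_right fun _ => ?_)
  obtain ⟨hx1, hx2⟩ := hbounds x
  obtain ⟨hy1, hy2⟩ := hbounds y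
  -- blocks are intervals, so within one sign class comparing (block, position) amounts to
  -- comparing positions
  have hmono := fun h : (x : ℕ) ≤ y => blkIdx_mono m h
  have hmono' := fun h : (y : ℕ) ≤ x => blkIdx_mono m h
  simp only [hR, signedRank]
  rw [mul_add_lt_mul_add_iff (by split_ifs <;> omega) (by split_ifs <;> omega)]
  rcases le_total (x : ℕ) y with h | h
  · have := hmono h
    split_ifs <;> omega
  · have := hmono' h
    split_ifs <;> omega

lemma keyD_injective (hms : ∑ s, m s = N) : Function.Injective (keyD N m c) := fun x y h => by
  have h1 := (keyD_lt_keyD_iff hms x y).not.1 h.not_lt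
  have h2 := (keyD_lt_keyD_iff hms y x).not.1 h.symm.not_lt
  simp only [not_or, not_and, not_lt] at h1 h2
  have hℓ := le_antisymm h2.1 h1.1
  exact Fin.ext (eq_of_signedRank_eq x.isLt y.isLt (le_antisymm (h2.2 hℓ.symm) (h1.2 hℓ)))

lemma phiD_lt_phiD_iff (hms : ∑ s, m s = N) (x y : Fin N) :
    (PhiD N m c).1 x < (PhiD N m c).1 y ↔ keyD N m c x < keyD N m c y := by
  have hsort : StrictMono (keyD N m c ∘ Tuple.sort (keyD N m c)) :=
    (Tuple.monotone_sort _).strictMono_of_injective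
      ((keyD_injective hms).comp (Equiv.injective _))
  show (Tuple.sort (keyD N m c))⁻¹ x < (Tuple.sort (keyD N m c))⁻¹ y ↔ _
  rw [← hsort.lt_iff_lt]
  simp only [Function.comp_apply, Equiv.Perm.coe_inv, Equiv.apply_symm_apply]

lemma mem_phiD_iff (x : Fin N) : x ∈ (PhiD N m c).2 ↔ (labOf m c x).2 = true := by
  simp [PhiD]

/-- Read along the positions of `τ_𝒟`, both sides are monotone with fibres of sizes `n_i`
and `r`. -/
lemma levelOf_phiD (hms : ∑ s, m s = N) (hnr : ∑ i, n i + r = N) (hc : IsAdmissible m n r c)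
    (x : Fin N) : levelOf n ((PhiD N m c).1 x) = (labOf m c x).1 := by
  have hg : Monotone fun u => (labOf m c ((PhiD N m c).1.symm u)).1 := fun u v huv => by
    by_contra! h
    have := (phiD_lt_phiD_iff hms _ _).2 ((keyD_lt_keyD_iff hms _ _).2 (Or.inl h))
    simp only [Equiv.apply_symm_apply] at this
    exact this.not_ge huv
  have hfib : ∀ j, #{u | (labOf m c ((PhiD N m c).1.symm u)).1 = j} =
      #{u : Fin N | levelOf n u = j} := fun j => by
    rw [card_filter_comp_perm (PhiD N m c).1.symm (fun x => (labOf m c x).1 = j),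
      card_labOf_fst_eq hms, (isAdmissible_iff.1 hc).2, card_levelOf_eq n hnr]
  have := congrFun (eq_of_monotone_of_card_fiber_eq hg
    (fun u v huv => levelOf_mono n (Fin.le_def.1 huv)) hfib) ((PhiD N m c).1 x)
  simpa using this.symm

lemma signedRank_phiD_lt_iff (hms : ∑ s, m s = N) {x y : Fin N}
    (h : labOf m c x = labOf m c y) :
    signedRank N ((labOf m c x).2 = true) ((PhiD N m c).1 x) <
        signedRank N ((labOf m c y).2 = true) ((PhiD N m c).1 y) ↔ x < y := by
  have hτ := fun a b => (phiD_lt_phiD_iff (c := c) hms a b).trans (keyD_lt_keyD_iff hms a b)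
  have hxy := hτ x y
  have hyx := hτ y x
  rw [h] at hxy hyx ⊢
  simp only [lt_irrefl, false_or, true_and] at hxy hyx
  have := x.isLt
  have := y.isLt
  have := ((PhiD N m c).1 x).isLt
  have := ((PhiD N m c).1 y).isLt
  rw [Fin.lt_def] at hxy hyx ⊢
  unfold signedRank at hxy hyx ⊢
  split_ifs at hxy hyx ⊢ <;> omega

lemma isPosRoot_wInvE_phiD (hms : ∑ s, m s = N) (hnr : ∑ i, n i + r = N)
    (hc : IsAdmissible m n r c) {u v : Fin N} (hl : levelOf n u = levelOf n v) (huv : u < v) :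
    IsPosRoot (wInvE (PhiD N m c).1 (PhiD N m c).2 u - wInvE (PhiD N m c).1 (PhiD N m c).2 v) := by
  rw [isPosRoot_wInvE_sub_wInvE_iff huv.ne]
  have hℓ : (labOf m c ((PhiD N m c).1.symm u)).1 = (labOf m c ((PhiD N m c).1.symm v)).1 := by
    rw [← levelOf_phiD hms hnr hc, ← levelOf_phiD hms hnr hc]
    simpa using hl
  have hlt : (PhiD N m c).1 ((PhiD N m c).1.symm u) < (PhiD N m c).1 ((PhiD N m c).1.symm v) := by
    simpa using huv
  have := (keyD_lt_keyD_iff hms _ _).1 ((phiD_lt_phiD_iff hms _ _).1 hlt)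
  simp only [mem_phiD_iff]
  exact (this.resolve_left hℓ.not_lt).2

lemma labOf_eq_labOf (hms : ∑ s, m s = N) {s : Fin t} {x y : Fin N}
    (hx : psum m s ≤ x ∧ (x : ℕ) < psum m (s + 1)) (hy : psum m s ≤ y ∧ (y : ℕ) < psum m (s + 1)) :
    labOf m c x = labOf m c y := by
  rw [labOf_eq hms, labOf_eq hms, (blockOf_eq_iff hms).2 hx, (blockOf_eq_iff hms).2 hy]

lemma notMem_phiD_of_labOf_eq_last (hms : ∑ s, m s = N) (hc : IsAdmissible m n r c) {x : Fin N}
    (hx : (labOf m c x).1 = Fin.last k) : x ∉ (PhiD N m c).2 := by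
  rw [labOf_eq hms] at hx
  simp [mem_phiD_iff, labOf_eq hms, hc.1 _ hx]

lemma isRightReduced_phiD (hms : ∑ s, m s = N) : IsRightReduced m (PhiD N m c) := by
  intro s x y hx hxy hy
  have hlt : x < y := Fin.lt_def.2 (by omega)
  rw [isPosRoot_wE_sub_wE_iff hlt.ne]
  simpa only [mem_phiD_iff] using
    (signedRank_phiD_lt_iff hms (labOf_eq_labOf hms ⟨hx, by omega⟩ ⟨by omega, hy⟩)).2 hlt

lemma isLeftReducedOnBlocks_phiD (hms : ∑ s, m s = N) (hnr : ∑ i, n i + r = N)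
    (hc : IsAdmissible m n r c) : IsLeftReducedOnBlocks n (PhiD N m c) :=
  fun i x y hx hxy hy => isPosRoot_wInvE_phiD hms hnr hc
    (((levelOf_eq_castSucc_iff n i).2 ⟨hx, by omega⟩).trans
      ((levelOf_eq_castSucc_iff n i).2 ⟨by omega, hy⟩).symm) (Fin.lt_def.2 (by omega))

lemma isLeftReducedOnTail_phiD (hms : ∑ s, m s = N) (hnr : ∑ i, n i + r = N)
    (hc : IsAdmissible m n r c) : IsLeftReducedOnTail n (PhiD N m c) :=
  fun x y hx hxy => isPosRoot_wInvE_phiD hms hnr hc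
    (((levelOf_eq_last_iff n).2 hx).trans ((levelOf_eq_last_iff n).2 (by omega)).symm)
    (Fin.lt_def.2 (by omega))

lemma isLeftReducedAtLongRoot_phiD (hN : 1 ≤ N) (hms : ∑ s, m s = N) (hnr : ∑ i, n i + r = N)
    (hc : IsAdmissible m n r c) : IsLeftReducedAtLongRoot hN r (PhiD N m c) := by
  intro hr
  have hlast : (labOf m c ((PhiD N m c).1.symm ⟨N - 1, by omega⟩)).1 = Fin.last k := by
    rw [← levelOf_phiD hms hnr hc, Equiv.apply_symm_apply, levelOf_eq_last_iff]
    dsimp only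
    omega
  rw [wInvE, if_neg (notMem_phiD_of_labOf_eq_last hms hc hlast), one_smul]
  exact isPosRoot_two_smul_single _

lemma conjugatesIntoLevi_phiD (hms : ∑ s, m s = N) (hnr : ∑ i, n i + r = N)
    (hc : IsAdmissible m n r c) : ConjugatesIntoLevi m n (PhiD N m c) := by
  intro s x y hx hx' hy hy' _
  have hlab := labOf_eq_labOf (c := c) hms ⟨hx, hx'⟩ ⟨hy, hy'⟩
  have hlx := levelOf_phiD hms hnr hc x
  have hly := levelOf_phiD hms hnr hc y
  rw [← hlab] at hly
  have hmem : x ∈ (PhiD N m c).2 ↔ y ∈ (PhiD N m c).2 := by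
    rw [mem_phiD_iff, mem_phiD_iff, hlab]
  rcases Fin.eq_castSucc_or_eq_last (labOf m c x).1 with ⟨i, hi⟩ | hi
  · rw [hi, levelOf_eq_castSucc_iff] at hlx hly
    refine Or.inl ⟨i, _, _, hlx.1, hlx.2, hly.1, hly.2, ?_⟩
    by_cases hxC : x ∈ (PhiD N m c).2
    · rw [wE, wE, if_pos hxC, if_pos (hmem.1 hxC)]
      exact Or.inr (by module)
    · rw [wE, wE, if_neg hxC, if_neg (hmem.not.1 hxC)]
      exact Or.inl (by module)
  · rw [hi, levelOf_eq_last_iff] at hlx hly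
    have hxC := notMem_phiD_of_labOf_eq_last hms hc hi
    refine Or.inr ⟨_, _, hlx, hly, Or.inr (Or.inr (Or.inl ?_))⟩
    rw [wE, wE, if_neg hxC, if_neg (hmem.not.1 hxC), one_smul, one_smul]

end Forward

section Backward

variable {N t k : ℕ} {m : Fin t → ℕ} {n : Fin k → ℕ} {r : ℕ}
  {w : Equiv.Perm (Fin N) × Finset (Fin N)}

def invRank (w : Equiv.Perm (Fin N) × Finset (Fin N)) (u : Fin N) : ℕ :=
  signedRank N (w.1.symm u ∈ w.2) (w.1.symm u)

lemma ordConnected_levelOf (j : Fin (k + 1)) : {u : Fin N | levelOf n u = j}.OrdConnected :=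
  Set.ordConnected_singleton.preimage_mono ((levelOf_mono n).comp Fin.val_strictMono.monotone)

lemma strictMonoOn_invRank {s : Set (Fin N)} (hs : s.OrdConnected)
    (h : ∀ u v : Fin N, u ∈ s → v ∈ s → (v : ℕ) = u + 1 →
      IsPosRoot (wInvE w.1 w.2 u - wInvE w.1 w.2 v)) :
    StrictMonoOn (invRank w) s :=
  strictMonoOn_of_consecutive_lt hs fun u v hu hv huv =>
    (isPosRoot_wInvE_sub_wInvE_iff (by rintro rfl; omega)).1 (h u v hu hv huv)

lemma strictMonoOn_invRank_levelOf (hblocks : IsLeftReducedOnBlocks n w)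
    (htail : IsLeftReducedOnTail n w) (j : Fin (k + 1)) :
    StrictMonoOn (invRank w) {u : Fin N | levelOf n u = j} := by
  refine strictMonoOn_invRank (ordConnected_levelOf j) fun u v hu hv huv => ?_
  rcases Fin.eq_castSucc_or_eq_last j with ⟨i, rfl⟩ | rfl
  · exact hblocks i u v ((levelOf_eq_castSucc_iff n i).1 hu).1 huv
      ((levelOf_eq_castSucc_iff n i).1 hv).2
  · exact htail u v ((levelOf_eq_last_iff n).1 hu) huv

/-- Along `C'_0` the signs can only change from `+` to `-`, and the last position carries a `+`
because `w⁻¹ (2 e_N)` is positive. -/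
lemma symm_notMem_of_levelOf_eq_last (hN : 1 ≤ N) (hnr : ∑ i, n i + r = N)
    (htail : IsLeftReducedOnTail n w) (hlong : IsLeftReducedAtLongRoot hN r w) (u : Fin N)
    (hu : levelOf n u = Fin.last k) : w.1.symm u ∉ w.2 := by
  intro hmem
  have hu' := (levelOf_eq_last_iff n).1 hu
  have huN := u.isLt
  have hmono : StrictMonoOn (invRank w) {v : Fin N | levelOf n v = Fin.last k} :=
    strictMonoOn_invRank (ordConnected_levelOf _) fun a b ha _ hab =>
      htail a b ((levelOf_eq_last_iff n).1 ha) hab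
  have hlast : w.1.symm ⟨N - 1, by omega⟩ ∉ w.2 := by
    intro hz
    have h := hlong (by omega)
    rw [wInvE, if_pos hz] at h
    exact not_isPosRoot_two_smul_neg_single _ h
  have hle : invRank w u ≤ invRank w ⟨N - 1, by omega⟩ :=
    hmono.monotoneOn hu ((levelOf_eq_last_iff n).2 (by dsimp only; omega))
      (Fin.le_def.2 (by dsimp only; omega))
  exact hlast ((le_signedRank_iff (w.1.symm _).isLt).1
    (((le_signedRank_iff (w.1.symm u).isLt).2 hmem).trans hle))

/-- `w e_x - w e_y` is supported on `{w x, w y}`, and its coordinate sum vanishes iff the two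
signs agree. -/
lemma mem_iff_mem_and_levelOf_eq (hneg : ∀ u : Fin N, levelOf n u = Fin.last k → w.1.symm u ∉ w.2)
    (hlevi : ConjugatesIntoLevi m n w) (hms : ∑ s, m s = N) {x y : Fin N}
    (hxy : blockOf hms x = blockOf hms y) :
    (x ∈ w.2 ↔ y ∈ w.2) ∧ levelOf n (w.1 x) = levelOf n (w.1 y) := by
  rcases eq_or_ne x y with rfl | hne
  · exact ⟨Iff.rfl, rfl⟩
  have hx := (blockOf_eq_iff hms).1 hxy
  have hy := (blockOf_eq_iff hms).1 (rfl : blockOf hms y = blockOf hms y)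
  obtain ⟨hVx, hVy⟩ := wE_sub_wE_apply_ne_zero (τ := w.1) (C := w.2) hne
  rcases hlevi _ x y hx.1 hx.2 hy.1 hy.2 hne with
    ⟨i, u, v, hu, hu', hv, hv', hV⟩ | ⟨u, v, hu, hv, hV⟩
  · have hlev : ∀ z, z = u ∨ z = v → levelOf n z = i.castSucc := by
      rintro z (rfl | rfl)
      exacts [(levelOf_eq_castSucc_iff n i).2 ⟨hu, hu'⟩, (levelOf_eq_castSucc_iff n i).2 ⟨hv, hv'⟩]
    refine ⟨(sum_wE_sub_wE_eq_zero_iff (τ := w.1)).1 ?_,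
      (hlev _ (eq_or_eq_of_apply_ne_zero (by tauto) hVx)).trans
        (hlev _ (eq_or_eq_of_apply_ne_zero (by tauto) hVy)).symm⟩
    rcases hV with h | h <;> rw [h] <;> simp [sum_sub_distrib]
  · have hlev : ∀ z, z = u ∨ z = v → levelOf n z = Fin.last k := by
      rintro z (rfl | rfl)
      exacts [(levelOf_eq_last_iff n).2 hu, (levelOf_eq_last_iff n).2 hv]
    have hx' := hlev _ (eq_or_eq_of_apply_ne_zero (by tauto) hVx)
    have hy' := hlev _ (eq_or_eq_of_apply_ne_zero (by tauto) hVy)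
    refine ⟨iff_of_false ?_ ?_, hx'.trans hy'.symm⟩
    · simpa using hneg _ hx'
    · simpa using hneg _ hy'

def labelingOf (m : Fin t → ℕ) (n : Fin k → ℕ) (w : Equiv.Perm (Fin N) × Finset (Fin N))
    (s : Fin t) : Fin (k + 1) × Bool :=
  if h : psum m s < N then (levelOf n (w.1 ⟨psum m s, h⟩), decide (⟨psum m s, h⟩ ∈ w.2))
  else (Fin.last k, false)

lemma labOf_labelingOf (hm : ∀ s, 0 < m s) (hms : ∑ s, m s = N)
    (hblock : ∀ x y, blockOf hms x = blockOf hms y →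
      (x ∈ w.2 ↔ y ∈ w.2) ∧ levelOf n (w.1 x) = levelOf n (w.1 y)) (x : Fin N) :
    labOf m (labelingOf m n w) x = (levelOf n (w.1 x), decide (x ∈ w.2)) := by
  rw [labOf_eq hms, labelingOf, dif_pos (psum_lt_of_pos hm hms _)]
  obtain ⟨hmem, hlev⟩ := hblock _ x (blockOf_psum hm hms _)
  rw [hlev, decide_eq_decide.2 hmem]

lemma isAdmissible_labelingOf (hms : ∑ s, m s = N) (hnr : ∑ i, n i + r = N)
    (hneg : ∀ u : Fin N, levelOf n u = Fin.last k → w.1.symm u ∉ w.2)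
    (hlab : ∀ x : Fin N, labOf m (labelingOf m n w) x = (levelOf n (w.1 x), decide (x ∈ w.2))) :
    IsAdmissible m n r (labelingOf m n w) := by
  refine isAdmissible_iff.2 ⟨fun s hs => ?_, fun j => ?_⟩
  · unfold labelingOf at hs ⊢
    split_ifs at hs ⊢
    · simpa using hneg _ hs
    · rfl
  · rw [← card_labOf_fst_eq hms]
    simp only [hlab]
    rw [card_filter_comp_perm w.1 (fun u => levelOf n u = j), card_levelOf_eq n hnr]

lemma phiD_labelingOf (hms : ∑ s, m s = N)
    (hmono : ∀ j, StrictMonoOn (invRank w) {u : Fin N | levelOf n u = j})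
    (hlab : ∀ x : Fin N, labOf m (labelingOf m n w) x = (levelOf n (w.1 x), decide (x ∈ w.2))) :
    PhiD N m (labelingOf m n w) = w := by
  have hlt : ∀ x y, keyD N m (labelingOf m n w) x < keyD N m (labelingOf m n w) y →
      w.1 x < w.1 y := by
    intro x y h
    rw [keyD_lt_keyD_iff hms, hlab, hlab] at h
    simp only [decide_eq_true_eq] at h
    rcases h with h | ⟨h, h'⟩
    · exact Fin.lt_def.2 ((levelOf_mono n).reflect_lt h)
    · exact ((hmono _).lt_iff_lt h rfl).1 (by simpa [invRank] using h')
  refine Prod.ext ?_ ?_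
  · show (Tuple.sort (keyD N m (labelingOf m n w)))⁻¹ = w.1
    rw [inv_eq_iff_eq_inv, eq_comm, Tuple.eq_sort_iff]
    refine ⟨fun a b hab => not_lt.1 fun h => ?_, fun a b hab he =>
      absurd (keyD_injective hms he) ((w.1⁻¹).injective.ne hab.ne)⟩
    have := hlt _ _ h
    simp only [Equiv.Perm.coe_inv, Equiv.apply_symm_apply] at this
    exact this.not_ge hab
  · ext x
    simp [PhiD, hlab]

lemma labelingOf_phiD {c : Fin t → Fin (k + 1) × Bool} (hm : ∀ s, 0 < m s)
    (hms : ∑ s, m s = N) (hnr : ∑ i, n i + r = N) (hc : IsAdmissible m n r c) :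
    labelingOf m n (PhiD N m c) = c := by
  funext s
  have hlab : labOf m c (psum m s) = c s := by
    have := labOf_eq hms c ⟨psum m s, psum_lt_of_pos hm hms s⟩
    rwa [blockOf_psum hm hms s] at this
  rw [labelingOf, dif_pos (psum_lt_of_pos hm hms s), levelOf_phiD hms hnr hc]
  ext <;> simp [mem_phiD_iff, hlab]

end Backward

/-- The set `S` of signed permutations `w = τ𝔠 ∈ 𝒲_N` satisfying the
reducedness conditions (i), (ii) and the block condition (iii) is in bijection, via
`𝒟 ↦ w_𝒟`, with the set of partitions `𝒟 = (D_1, E_1, …, D_k, E_k, D_0)` of `[1,t]` with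
`n_i = Σ_{j ∈ D_i ∪ E_i} m_j` and `r = Σ_{j ∈ D_0} m_j`. -/
theorem stmt12 (N t k : ℕ) (hN : 1 ≤ N) (m : Fin t → ℕ) (hm : ∀ s, 0 < m s)
    (hms : ∑ s, m s = N) (n : Fin k → ℕ) (r : ℕ) (hnr : (∑ i, n i) + r = N) :
    Set.BijOn (PhiD N m)
      { c : Fin t → Fin (k + 1) × Bool |
        (∀ s, (c s).1 = Fin.last k → (c s).2 = false) ∧
        (∀ i : Fin k, n i =
          ∑ s ∈ Finset.univ.filter (fun s => (c s).1 = i.castSucc), m s) ∧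
        r = ∑ s ∈ Finset.univ.filter (fun s => (c s).1 = Fin.last k), m s }
      { w : Equiv.Perm (Fin N) × Finset (Fin N) |
        -- (i) w maps the roots `e_x - e_{x+1}` inside each `C_s` to positive roots
        (∀ s : Fin t, ∀ x y : Fin N, psum m (s : ℕ) ≤ (x : ℕ) → (y : ℕ) = (x : ℕ) + 1 →
          (y : ℕ) < psum m ((s : ℕ) + 1) → IsPosRoot (wE w.1 w.2 x - wE w.1 w.2 y)) ∧
        -- (ii) w⁻¹ maps the roots `e_x - e_{x+1}` inside each `C'_i`, inside `C'_0`,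
        -- and (if r ≥ 1) the root `2 e_N`, to positive roots
        (∀ i : Fin k, ∀ x y : Fin N, psum n (i : ℕ) ≤ (x : ℕ) → (y : ℕ) = (x : ℕ) + 1 →
          (y : ℕ) < psum n ((i : ℕ) + 1) → IsPosRoot (wInvE w.1 w.2 x - wInvE w.1 w.2 y)) ∧
        (∀ x y : Fin N, (∑ i, n i) ≤ (x : ℕ) → (y : ℕ) = (x : ℕ) + 1 →
          IsPosRoot (wInvE w.1 w.2 x - wInvE w.1 w.2 y)) ∧
        (1 ≤ r → IsPosRoot ((2 : ℝ) • wInvE w.1 w.2 ⟨N - 1, by omega⟩)) ∧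
        -- (iii) w maps each `e_x - e_y` with `x ≠ y` in a common `C_s` to `±(e_u - e_v)`
        -- with `u, v` in a common `C'_i`, or to `± e_u ± e_v` with `u, v ∈ C'_0`
        (∀ s : Fin t, ∀ x y : Fin N,
          psum m (s : ℕ) ≤ (x : ℕ) → (x : ℕ) < psum m ((s : ℕ) + 1) →
          psum m (s : ℕ) ≤ (y : ℕ) → (y : ℕ) < psum m ((s : ℕ) + 1) → x ≠ y →
          ((∃ i : Fin k, ∃ u v : Fin N,
              psum n (i : ℕ) ≤ (u : ℕ) ∧ (u : ℕ) < psum n ((i : ℕ) + 1) ∧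
              psum n (i : ℕ) ≤ (v : ℕ) ∧ (v : ℕ) < psum n ((i : ℕ) + 1) ∧
              (wE w.1 w.2 x - wE w.1 w.2 y =
                  (Pi.single u 1 : Fin N → ℝ) - Pi.single v 1 ∨
                wE w.1 w.2 x - wE w.1 w.2 y =
                  -((Pi.single u 1 : Fin N → ℝ) - Pi.single v 1))) ∨
            (∃ u v : Fin N, (∑ i, n i) ≤ (u : ℕ) ∧ (∑ i, n i) ≤ (v : ℕ) ∧
              (wE w.1 w.2 x - wE w.1 w.2 y =
                  (Pi.single u 1 : Fin N → ℝ) + Pi.single v 1 ∨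
                wE w.1 w.2 x - wE w.1 w.2 y =
                  -((Pi.single u 1 : Fin N → ℝ) + Pi.single v 1) ∨
                wE w.1 w.2 x - wE w.1 w.2 y =
                  (Pi.single u 1 : Fin N → ℝ) - Pi.single v 1 ∨
                wE w.1 w.2 x - wE w.1 w.2 y =
                  -((Pi.single u 1 : Fin N → ℝ) - Pi.single v 1))))) } := by
  refine ⟨fun c hc => ?_, fun c₁ hc₁ c₂ hc₂ he => ?_, fun w hw => ?_⟩
  · exact ⟨isRightReduced_phiD hms, isLeftReducedOnBlocks_phiD hms hnr hc,
      isLeftReducedOnTail_phiD hms hnr hc, isLeftReducedAtLongRoot_phiD hN hms hnr hc,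
      conjugatesIntoLevi_phiD hms hnr hc⟩
  · rw [← labelingOf_phiD hm hms hnr hc₁, he, labelingOf_phiD hm hms hnr hc₂]
  · obtain ⟨-, hblocks, htail, hlong, hlevi⟩ := hw
    have hneg := symm_notMem_of_levelOf_eq_last hN hnr htail hlong
    have hlab := labOf_labelingOf hm hms fun x y => mem_iff_mem_and_levelOf_eq hneg hlevi hms
    exact ⟨labelingOf m n w, isAdmissible_labelingOf hms hnr hneg hlab,
      phiD_labelingOf hms (strictMonoOn_invRank_levelOf hblocks htail) hlab⟩

end Stmt12
end

section
/- Let m ≥ 1 and set Γ = { e_j − e_{j+1} : 1 ≤ j ≤ m−1 } ∪ { 2e_m, 2e_{m+1} } ⊆ ℝ^{m+1}. For a signed permutation w = τ𝔠 ∈ 𝒲_{m+1} the following are equivalent: (a) w(γ) is a negative root for every γ ∈ Γ; (b) 𝔠 = {1,…,m+1} and τ(1) < τ(2) < ⋯ < τ(m). -/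
/-!
Since `w(2e_i) = ±2e_{τ i}`, it is negative exactly when `i ∈ 𝔠`. If `x + 1 ∈ 𝔠` but `x ∉ 𝔠`,
then `w(e_x - e_{x+1}) = e_{τ x} + e_{τ(x+1)}` is positive, so membership in `𝔠` propagates
downwards from `m - 1` and `𝔠` is everything. With all signs negative,
`w(e_x - e_{x+1}) = e_{τ(x+1)} - e_{τ x}` is negative iff `τ x < τ(x+1)`, and these consecutive
inequalities chain to monotonicity of `τ` on `[0, m)`.
-/

namespace Stmt13

/-- A positive root of type `C_{m+1}` in `ℝ^{m+1}`: `e_i - e_j` (`i < j`) or `e_i + e_j`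
(`i ≤ j`). -/
def IsPosRoot {N : ℕ} (v : Fin N → ℝ) : Prop :=
  (∃ i j : Fin N, i < j ∧ v = Pi.single i 1 - Pi.single j 1) ∨
  (∃ i j : Fin N, i ≤ j ∧ v = Pi.single i (1 : ℝ) + Pi.single j 1)

/-- A negative root: the negative of a positive root. -/
def IsNegRoot {N : ℕ} (v : Fin N → ℝ) : Prop := IsPosRoot (-v)

/-- The image `w e_i` of `e_i` under the signed permutation `w = τ𝔠`. -/
def wE {N : ℕ} (τ : Equiv.Perm (Fin N)) (c : Finset (Fin N)) (i : Fin N) : Fin N → ℝ :=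
  (if i ∈ c then (-1 : ℝ) else 1) • (Pi.single (τ i) 1 : Fin N → ℝ)

section Chain

variable {N m : ℕ} {α : Type*} [Preorder α] {f : Fin N → α}

lemma Fin.val_orderSucc_of_not_isMax {a : Fin N} (ha : ¬IsMax a) :
    ((Order.succ a : Fin N) : ℕ) = a + 1 :=
  (Nat.covBy_iff_add_one_eq.mp (Fin.covBy_iff.mp (Order.covBy_succ_of_not_isMax ha))).symm

lemma ordConnected_setOf_val_lt : {i : Fin N | (i : ℕ) < m}.OrdConnected :=
  ⟨fun _ _ _ hy _ hz => lt_of_le_of_lt (Fin.le_def.mp hz.2) hy⟩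

lemma strictMonoOn_setOf_val_lt_of_lt_succ
    (hf : ∀ x y : Fin N, (y : ℕ) = x + 1 → (y : ℕ) < m → f x < f y) :
    StrictMonoOn f {i | (i : ℕ) < m} :=
  strictMonoOn_of_lt_succ ordConnected_setOf_val_lt fun a ha _ hs =>
    hf a _ (Fin.val_orderSucc_of_not_isMax ha) hs

lemma antitoneOn_setOf_val_lt_of_succ_le
    (hf : ∀ x y : Fin N, (y : ℕ) = x + 1 → (y : ℕ) < m → f y ≤ f x) :
    AntitoneOn f {i | (i : ℕ) < m} :=
  antitoneOn_of_succ_le ordConnected_setOf_val_lt fun a ha _ hs =>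
    hf a _ (Fin.val_orderSucc_of_not_isMax ha) hs

end Chain

section Roots

variable {N : ℕ}

lemma IsPosRoot.not_nonpos {v : Fin N → ℝ} (h : IsPosRoot v) : ¬v ≤ 0 := by
  intro hv
  rcases h with ⟨i, j, hij, rfl⟩ | ⟨i, j, -, rfl⟩
  · simpa [hij.ne] using (hv i).not_gt
  · have := hv i
    simp only [Pi.add_apply, Pi.single_eq_same, Pi.zero_apply, Pi.single_apply] at this
    split_ifs at this <;> norm_num at this

lemma isPosRoot_two_smul_single (a : Fin N) : IsPosRoot ((2 : ℝ) • (Pi.single a 1 : Fin N → ℝ)) :=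
  Or.inr ⟨a, a, le_rfl, two_smul ℝ _⟩

lemma isPosRoot_single_sub_single_iff {a b : Fin N} (hab : a ≠ b) :
    IsPosRoot (Pi.single a (1 : ℝ) - Pi.single b 1) ↔ a < b := by
  refine ⟨?_, fun h => Or.inl ⟨a, b, h, rfl⟩⟩
  rintro (⟨i, j, hij, hv⟩ | ⟨i, j, -, hv⟩)
  · have ha := congrFun hv a
    have hb := congrFun hv b
    simp only [Pi.sub_apply, Pi.single_apply, if_neg hab, if_neg hab.symm] at ha hb
    obtain rfl : a = i := by split_ifs at ha <;> first | assumption | norm_num at ha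
    obtain rfl : b = j := by split_ifs at hb <;> first | assumption | norm_num at hb
    exact hij
  · have hb := congrFun hv b
    simp only [Pi.sub_apply, Pi.add_apply, Pi.single_apply, if_neg hab.symm] at hb
    split_ifs at hb <;> norm_num at hb

variable (τ : Equiv.Perm (Fin N)) {c : Finset (Fin N)} {i x y : Fin N}

lemma wE_of_mem (hi : i ∈ c) : wE τ c i = -Pi.single (τ i) 1 := by
  simp [wE, hi]

lemma wE_of_notMem (hi : i ∉ c) : wE τ c i = Pi.single (τ i) 1 := by
  simp [wE, hi]

lemma isNegRoot_two_smul_wE_iff : IsNegRoot ((2 : ℝ) • wE τ c i) ↔ i ∈ c := by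
  by_cases hi : i ∈ c
  · simpa [IsNegRoot, wE_of_mem τ hi, hi] using isPosRoot_two_smul_single (τ i)
  · refine iff_of_false (fun h => h.not_nonpos ?_) hi
    intro k
    simp only [wE_of_notMem τ hi, Pi.neg_apply, Pi.smul_apply, Pi.single_apply, smul_eq_mul, mul_ite,
      mul_one, mul_zero, Pi.zero_apply, Left.neg_nonpos_iff]
    split_ifs <;> norm_num

lemma mem_of_isNegRoot_wE_sub (hy : y ∈ c) (h : IsNegRoot (wE τ c x - wE τ c y)) : x ∈ c := by
  by_contra hx
  refine h.not_nonpos fun k => ?_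
  simp only [wE_of_notMem τ hx, wE_of_mem τ hy, sub_neg_eq_add, Pi.neg_apply, Pi.add_apply,
    Pi.single_apply, neg_add_rev, Pi.zero_apply, add_neg_le_iff_le_add, zero_add]
  split_ifs <;> norm_num

lemma isNegRoot_wE_sub_iff_of_mem (hx : x ∈ c) (hy : y ∈ c) (hxy : x ≠ y) :
    IsNegRoot (wE τ c x - wE τ c y) ↔ τ x < τ y := by
  rw [IsNegRoot, wE_of_mem τ hx, wE_of_mem τ hy, neg_sub, sub_neg_eq_add, neg_add_eq_sub]
  exact isPosRoot_single_sub_single_iff (τ.injective.ne hxy)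

end Roots

/-- Let `m ≥ 1` and `Γ = {e_j - e_{j+1} : 1 ≤ j ≤ m-1} ∪ {2e_m, 2e_{m+1}}`
in `ℝ^{m+1}`.  For a signed permutation `w = τ𝔠 ∈ 𝒲_{m+1}` the following are equivalent:
(a) `w γ` is a negative root for every `γ ∈ Γ`;
(b) `𝔠 = {1, …, m+1}` and `τ(1) < τ(2) < ⋯ < τ(m)` (0-indexed: `τ` is strictly increasing
on the first `m` indices). -/
theorem stmt13 (m : ℕ) (hm : 1 ≤ m) (τ : Equiv.Perm (Fin (m + 1))) (c : Finset (Fin (m + 1))) :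
    ((∀ x y : Fin (m + 1), (y : ℕ) = (x : ℕ) + 1 → (y : ℕ) < m →
        IsNegRoot (wE τ c x - wE τ c y)) ∧
      IsNegRoot ((2 : ℝ) • wE τ c ⟨m - 1, by omega⟩) ∧
      IsNegRoot ((2 : ℝ) • wE τ c ⟨m, by omega⟩)) ↔
    (c = Finset.univ ∧ ∀ x y : Fin (m + 1), x < y → (y : ℕ) < m → τ x < τ y) := by
  simp only [isNegRoot_two_smul_wE_iff]
  constructor
  · rintro ⟨hpair, hpred, hlast⟩
    have hmem : AntitoneOn (· ∈ c) {i : Fin (m + 1) | (i : ℕ) < m} :=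
      antitoneOn_setOf_val_lt_of_succ_le fun x y hxy hy hyc =>
        mem_of_isNegRoot_wE_sub τ hyc (hpair x y hxy hy)
    have huniv : c = Finset.univ := by
      refine Finset.eq_univ_iff_forall.mpr fun i => ?_
      rcases Nat.lt_succ_iff_lt_or_eq.mp i.isLt with hi | hi
      · exact hmem (by simp [hi]) (show m - 1 < m by omega)
          (Fin.le_def.mpr (show (i : ℕ) ≤ m - 1 by omega)) hpred
      · exact (Fin.ext hi : i = ⟨m, _⟩) ▸ hlast
    subst huniv
    have hmono : StrictMonoOn τ {i : Fin (m + 1) | (i : ℕ) < m} :=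
      strictMonoOn_setOf_val_lt_of_lt_succ fun x y hxy hy =>
        (isNegRoot_wE_sub_iff_of_mem τ (Finset.mem_univ x) (Finset.mem_univ y)
          (Fin.ne_of_val_ne (by omega))).mp (hpair x y hxy hy)
    exact ⟨rfl, fun x y hxy hy => hmono ((Fin.lt_def.mp hxy).trans hy) hy hxy⟩
  · rintro ⟨rfl, hmono⟩
    refine ⟨fun x y hxy hy => ?_, Finset.mem_univ _, Finset.mem_univ _⟩
    exact (isNegRoot_wE_sub_iff_of_mem τ (Finset.mem_univ x) (Finset.mem_univ y)
      (Fin.ne_of_val_ne (by omega))).mpr (hmono x y (Fin.lt_def.mpr (by omega)) hy)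

end Stmt13
end

section
/- Let m, n ≥ 1, let (n_1,…,n_k, r) be a tuple with n_i ≥ 1, r ≥ 0 and n_1+⋯+n_k+r = m+2n, and set ν_ℓ = n_1+⋯+n_ℓ. Let (D_1, E_1, …, D_k, E_k, D_0) be a partition of the set [1, m+1] into 2k+1 (possibly empty) subsets such that, assigning weight 1 to each element of [1,m] and weight 2n to the element m+1, the total weight of D_i ∪ E_i equals n_i for each i ∈ [1,k] and the total weight of D_0 equals r. Assume m+1 ∈ D_i for some (necessarily unique) i ∈ [0,k] (in particular m+1 lies in no E_j). For ℓ ∈ [1,k] define L_ℓ = Σ_{x ∈ (D_1∪⋯∪D_ℓ)∖{m+1}} (m+1−x) − Σ_{y ∈ E_1∪⋯∪E_ℓ} (m+1−y), and define R_ℓ = Σ_{x=1}^{ν_ℓ} (m+1−x) if i = 0 or ℓ < i, and R_ℓ = n + Σ_{x=1}^{ν_ℓ−2n} (m+1−x) if 1 ≤ i ≤ ℓ. Then for every ℓ ∈ [1,k]: L_ℓ ≤ R_ℓ, with equality if and only if (i = 0 or ℓ < i) and D_1∪⋯∪D_ℓ = [1, ν_ℓ]. Consequently, L_ℓ = R_ℓ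 holds for every ℓ ∈ [1,k] if and only if m+1 ∈ D_0, all E_ℓ are empty and D_ℓ = [ν_{ℓ−1}+1, ν_ℓ] for every ℓ ∈ [1,k]; in that case r ≥ 2n. -/
/-!
With `f x = m + 1 - x`, which is strictly decreasing and positive on `[1, m]`, we have
`L_ℓ = Σ_D f - Σ_E f` for `D = (D_1 ∪ ⋯ ∪ D_ℓ) ∖ {m+1}` and `E = E_1 ∪ ⋯ ∪ E_ℓ`. Counting
weights gives `|D| + |E| = ν_ℓ`, or `ν_ℓ - 2n` when `m+1 ∈ D_1 ∪ ⋯ ∪ D_ℓ`. Since `f` is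
decreasing, `Σ_D f ≤ Σ_{[1,|D|]} f ≤ Σ_{[1,|D|+|E|]} f`, with equality in the first step only
for `D = [1, |D|]`. The right-hand side is `R_ℓ` in the first case and `R_ℓ - n` in the second,
so `L_ℓ = R_ℓ` forces `m+1 ∉ D_1 ∪ ⋯ ∪ D_ℓ`, `E = ∅` and `D = [1, ν_ℓ]`. The global statement
is the conjunction of these prefix conditions, rewritten as conditions on the single blocks by
taking differences; `r ≥ 2n` because then `m+1 ∈ D_0`.
-/

namespace Stmt14

/-- Partial sums `ν_j = n 0 + ⋯ + n (j-1)` (the tuple is extended by zero beyond `k`). -/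
def psum {k : ℕ} (n : Fin k → ℕ) (j : ℕ) : ℕ :=
  ∑ i ∈ Finset.range j, if h : i < k then n ⟨i, h⟩ else 0

/-- The quantity
`L_ℓ = Σ_{x ∈ (D_1∪⋯∪D_ℓ)∖{m+1}} (m+1-x) - Σ_{y ∈ E_1∪⋯∪E_ℓ} (m+1-y)`.
The partition `(D_1, E_1, …, D_k, E_k, D_0)` of `[1, m+1]` is encoded by
`c : Fin (m+1) → Fin (k+1) × Bool`, where `(c s).1 = i < k` means that `s` lies in
`D_{i+1}` or `E_{i+1}` (according to whether `(c s).2` is `false` or `true`) and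
`(c s).1 = k` means that `s ∈ D_0`. -/
def Lsum (m : ℕ) {k : ℕ} (c : Fin (m + 1) → Fin (k + 1) × Bool) (l : Fin k) : ℤ :=
  (∑ s ∈ Finset.univ.filter
      (fun s : Fin (m + 1) => (s : ℕ) ≠ m ∧ (c s).2 = false ∧ ((c s).1 : ℕ) ≤ (l : ℕ)),
    ((m : ℤ) - (s : ℕ))) -
  (∑ s ∈ Finset.univ.filter
      (fun s : Fin (m + 1) => (c s).2 = true ∧ ((c s).1 : ℕ) ≤ (l : ℕ)),
    ((m : ℤ) - (s : ℕ)))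

/-- The quantity `R_ℓ`: `Σ_{x=1}^{ν_ℓ} (m+1-x)` if `i = 0` or `ℓ < i` (where
`m+1 ∈ D_i`), and `n + Σ_{x=1}^{ν_ℓ-2n} (m+1-x)` if `1 ≤ i ≤ ℓ`. -/
def Rsum (m n : ℕ) {k : ℕ} (nn : Fin k → ℕ) (c : Fin (m + 1) → Fin (k + 1) × Bool)
    (l : Fin k) : ℤ :=
  if (l : ℕ) < ((c ⟨m, Nat.lt_succ_self m⟩).1 : ℕ) then
    ∑ x ∈ Finset.range (psum nn ((l : ℕ) + 1)), ((m : ℤ) - x)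
  else
    (n : ℤ) + ∑ x ∈ Finset.range (psum nn ((l : ℕ) + 1) - 2 * n), ((m : ℤ) - x)

open Finset

section SumOverPrefix

variable {M : Type*} [AddCommMonoid M] [PartialOrder M] {f : ℕ → M}

theorem sum_le_sum_range_card [IsOrderedAddMonoid M] (hf : Antitone f) (A : Finset ℕ) :
    ∑ x ∈ A, f x ≤ ∑ x ∈ range #A, f x := by
  induction A using Finset.induction_on_max with
  | empty => simp
  | insert a s hlt ih =>
    have ha : a ∉ s := fun h => (hlt a h).false
    have hcard : #s ≤ a :=
      (card_le_card (t := range a) fun x hx => mem_range.2 (hlt x hx)).trans_eq (card_range a)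
    rw [sum_insert ha, card_insert_of_notMem ha, sum_range_succ, add_comm]
    exact add_le_add ih (hf hcard)

theorem sum_lt_sum_range_card [IsOrderedCancelAddMonoid M] (hf : StrictAnti f) {A : Finset ℕ}
    (hA : A ≠ range #A) : ∑ x ∈ A, f x < ∑ x ∈ range #A, f x := by
  induction A using Finset.induction_on_max with
  | empty => simp at hA
  | insert a s hlt ih =>
    have ha : a ∉ s := fun h => (hlt a h).false
    have hcard : #s ≤ a :=
      (card_le_card (t := range a) fun x hx => mem_range.2 (hlt x hx)).trans_eq (card_range a)
    rw [card_insert_of_notMem ha] at hA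
    rw [sum_insert ha, card_insert_of_notMem ha, sum_range_succ, add_comm]
    by_cases hs : s = range #s
    · have hlt : #s < a := hcard.lt_of_ne fun h => hA (by rw [range_add_one, ← hs, h])
      exact add_lt_add_of_le_of_lt (sum_le_sum_range_card hf.antitone s) (hf hlt)
    · exact add_lt_add_of_lt_of_le (ih hs) (hf.antitone hcard)

theorem sum_eq_sum_range_card_iff [IsOrderedCancelAddMonoid M] (hf : StrictAnti f)
    (A : Finset ℕ) : ∑ x ∈ A, f x = ∑ x ∈ range #A, f x ↔ A = range #A :=
  ⟨fun h => by_contra fun hA => (sum_lt_sum_range_card hf hA).ne h, fun h => by rw [← h]⟩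

theorem map_valEmbedding_eq_range_card_iff {n : ℕ} (A : Finset (Fin n)) :
    A.map Fin.valEmbedding = range #A ↔ ∀ s : Fin n, s ∈ A ↔ (s : ℕ) < #A := by
  constructor
  · intro h s
    simpa [h] using (mem_map' Fin.valEmbedding (s := A) (a := s)).symm
  · intro h
    ext x
    simp only [mem_map, Fin.valEmbedding_apply, mem_range]
    refine ⟨fun ⟨s, hs, hsx⟩ => hsx ▸ (h s).1 hs, fun hx => ?_⟩
    have hxn : x < n := hx.trans_le (by simpa using card_le_univ A)
    exact ⟨⟨x, hxn⟩, (h _).2 hx, rfl⟩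

theorem sum_fin_le_sum_range_card [IsOrderedAddMonoid M] (hf : Antitone f) {n : ℕ}
    (A : Finset (Fin n)) : ∑ s ∈ A, f s ≤ ∑ x ∈ range #A, f x := by
  simpa using sum_le_sum_range_card hf (A.map Fin.valEmbedding)

theorem sum_fin_eq_sum_range_card_iff [IsOrderedCancelAddMonoid M] (hf : StrictAnti f) {n : ℕ}
    (A : Finset (Fin n)) :
    ∑ s ∈ A, f s = ∑ x ∈ range #A, f x ↔ ∀ s : Fin n, s ∈ A ↔ (s : ℕ) < #A := by
  simpa [map_valEmbedding_eq_range_card_iff] using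
    sum_eq_sum_range_card_iff hf (A.map Fin.valEmbedding)

end SumOverPrefix

theorem card_eq_of_forall_mem_iff_val_lt {n ν : ℕ} (hν : ν ≤ n) {A : Finset (Fin n)}
    (hA : ∀ s, s ∈ A ↔ (s : ℕ) < ν) : #A = ν := by
  rw [show A = univ.filter (fun s : Fin n => (s : ℕ) < ν) by ext; simp [hA],
    Fin.card_filter_val_lt, min_eq_right hν]

theorem strictAnti_intCast_sub (m : ℕ) : StrictAnti fun x : ℕ => (m : ℤ) - x :=
  fun _ _ h => sub_lt_sub_left (by exact_mod_cast h) _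

theorem psum_mono {k : ℕ} (nn : Fin k → ℕ) : Monotone (psum nn) := fun _ _ h =>
  sum_le_sum_of_subset (range_subset_range.2 h)

theorem sum_range_intCast_sub_mono {m a b : ℕ} (hab : a ≤ b) (hb : b ≤ m + 1) :
    ∑ x ∈ range a, ((m : ℤ) - x) ≤ ∑ x ∈ range b, ((m : ℤ) - x) :=
  sum_le_sum_of_subset_of_nonneg (range_subset_range.2 hab) fun x hx _ => by
    have := mem_range.1 hx
    omega

theorem exists_le_and_le_and_lt_of_lt {ν : ℕ → ℕ} (h0 : ν 0 = 0) {v : ℕ} :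
    ∀ {l : ℕ}, v < ν (l + 1) → ∃ j ≤ l, ν j ≤ v ∧ v < ν (j + 1)
  | 0, h => ⟨0, le_rfl, by omega, h⟩
  | l + 1, h =>
    if hv : ν (l + 1) ≤ v then ⟨l + 1, le_rfl, hv, h⟩
    else
      let ⟨j, hj, hjv⟩ := exists_le_and_le_and_lt_of_lt h0 (not_le.1 hv)
      ⟨j, hj.trans l.le_succ, hjv⟩

theorem forall_le_iff_lt_iff_forall_eq_iff {ν : ℕ → ℕ} (hν : Monotone ν) (h0 : ν 0 = 0)
    {k g v : ℕ} :
    (∀ l < k, (g ≤ l ↔ v < ν (l + 1))) ↔ ∀ l < k, (g = l ↔ ν l ≤ v ∧ v < ν (l + 1)) := by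
  constructor
  · intro h l hl
    constructor
    · rintro rfl
      refine ⟨?_, (h g hl).1 le_rfl⟩
      rcases g with _ | g
      · omega
      · exact not_lt.1 fun hv => by simpa using (h g (by omega)).2 hv
    · rintro ⟨hlv, hvl⟩
      have hgl := (h l hl).2 hvl
      rcases l with _ | l
      · omega
      · have := mt (h l (by omega)).1
        omega
  · intro h l hl
    constructor
    · intro hgl
      exact ((h g (by omega)).1 rfl).2.trans_le (hν (by omega))
    · intro hvl
      obtain ⟨j, hjl, hj⟩ := exists_le_and_le_and_lt_of_lt h0 hvl
      exact ((h j (by omega)).2 hj).symm ▸ hjl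

/-- `s : Fin (m + 1)` stands for the paper's `s + 1 ∈ [1, m+1]`; `Fin.last m` is `m+1`. -/
def weight (m n : ℕ) (s : Fin (m + 1)) : ℕ := if (s : ℕ) = m then 2 * n else 1

def HasBlockWeights {m k : ℕ} (n : ℕ) (nn : Fin k → ℕ) (c : Fin (m + 1) → Fin (k + 1) × Bool) :
    Prop :=
  ∀ i : Fin k, ∑ s ∈ univ.filter (fun s => (c s).1 = i.castSucc), weight m n s = nn i

section Exponent

variable {m n k : ℕ} {nn : Fin k → ℕ} (c : Fin (m + 1) → Fin (k + 1) × Bool) (l : Fin k)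

/-- `(D_1 ∪ ⋯ ∪ D_ℓ) ∖ {m+1}`. -/
def lowerD : Finset (Fin (m + 1)) :=
  univ.filter fun s => (s : ℕ) ≠ m ∧ (c s).2 = false ∧ ((c s).1 : ℕ) ≤ l

/-- `E_1 ∪ ⋯ ∪ E_ℓ`. -/
def lowerE : Finset (Fin (m + 1)) :=
  univ.filter fun s => (c s).2 = true ∧ ((c s).1 : ℕ) ≤ l

theorem Lsum_eq_sub :
    Lsum m c l = ∑ s ∈ lowerD c l, ((m : ℤ) - (s : ℕ)) - ∑ s ∈ lowerE c l, ((m : ℤ) - (s : ℕ)) :=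
  rfl

variable {c}

theorem val_lt_of_mem_lowerE (hmem : (c (Fin.last m)).2 = false) {s : Fin (m + 1)}
    (hs : s ∈ lowerE c l) : (s : ℕ) < m := by
  have hsm : s ≠ Fin.last m := by
    rintro rfl
    simp [lowerE, hmem] at hs
  exact Fin.val_lt_last hsm

theorem sum_lowerE_nonneg (hmem : (c (Fin.last m)).2 = false) :
    0 ≤ ∑ s ∈ lowerE c l, ((m : ℤ) - (s : ℕ)) :=
  sum_nonneg fun s hs => by have := val_lt_of_mem_lowerE l hmem hs; omega

theorem sum_lowerE_pos (hmem : (c (Fin.last m)).2 = false) (hE : (lowerE c l).Nonempty) :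
    0 < ∑ s ∈ lowerE c l, ((m : ℤ) - (s : ℕ)) :=
  sum_pos (fun s hs => by have := val_lt_of_mem_lowerE l hmem hs; omega) hE

theorem card_lowerD_add_card_lowerE_le (hmem : (c (Fin.last m)).2 = false) :
    #(lowerD c l) + #(lowerE c l) ≤ m := by
  have hdisj : Disjoint (lowerD c l) (lowerE c l) :=
    disjoint_filter.2 fun s _ hD hE => by simp [hD.2.1] at hE
  have hsub : lowerD c l ∪ lowerE c l ⊆ univ.erase (Fin.last m) := fun s hs => by
    rcases mem_union.1 hs with hs | hs
    · exact mem_erase.2 ⟨fun h => (mem_filter.1 hs).2.1 (h ▸ rfl), mem_univ s⟩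
    · exact mem_erase.2 ⟨fun h => by subst h; simp [lowerE, hmem] at hs, mem_univ s⟩
  simpa [card_union_of_disjoint hdisj] using card_le_card hsub

theorem sum_weight_filter_le (hwD : HasBlockWeights n nn c) :
    ∑ s ∈ univ.filter (fun s => ((c s).1 : ℕ) ≤ l), weight m n s = psum nn (l + 1) := by
  rw [← sum_fiberwise_of_maps_to (t := range (l + 1)) (g := fun s => ((c s).1 : ℕ))
    (by simp), psum]
  refine sum_congr rfl fun j hj => ?_
  have hjl := mem_range.1 hj
  have hjk : j < k := hjl.trans_le l.isLt
  rw [dif_pos hjk, ← hwD ⟨j, hjk⟩, filter_filter]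
  refine sum_congr (filter_congr fun s _ => ?_) fun _ _ => rfl
  simp only [Fin.ext_iff, Fin.val_castSucc]
  omega

theorem card_lowerD_add_card_lowerE_add
    (hwD : HasBlockWeights n nn c) (hmem : (c (Fin.last m)).2 = false) :
    #(lowerD c l) + #(lowerE c l) + (if ((c (Fin.last m)).1 : ℕ) ≤ l then 2 * n else 0) =
      psum nn (l + 1) := by
  unfold lowerD lowerE
  rw [← sum_weight_filter_le l hwD, card_filter, card_filter, sum_filter,
    ← Fintype.sum_ite_eq' (Fin.last m) fun s => if ((c s).1 : ℕ) ≤ l then 2 * n else 0,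
    ← sum_add_distrib, ← sum_add_distrib]
  refine sum_congr rfl fun s _ => ?_
  by_cases hs : s = Fin.last m
  · subst hs
    simp [weight, hmem]
  · have hsm : (s : ℕ) ≠ m := fun h => hs (Fin.ext h)
    cases (c s).2 <;> by_cases ((c s).1 : ℕ) ≤ l <;> simp [weight, *]

theorem Lsum_le_Rsum_and_eq_iff_of_lt
    (hwD : HasBlockWeights n nn c) (hmem : (c (Fin.last m)).2 = false)
    (hl : (l : ℕ) < (c (Fin.last m)).1) :
    Lsum m c l ≤ Rsum m n nn c l ∧ (Lsum m c l = Rsum m n nn c l ↔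
      lowerE c l = ∅ ∧ ∀ s, s ∈ lowerD c l ↔ (s : ℕ) < psum nn (l + 1)) := by
  have hcard : #(lowerD c l) + #(lowerE c l) = psum nn (l + 1) := by
    simpa [not_le.2 hl] using card_lowerD_add_card_lowerE_add l hwD hmem
  have hR : Rsum m n nn c l = ∑ x ∈ range (psum nn (l + 1)), ((m : ℤ) - x) := if_pos hl
  have hD := sum_fin_le_sum_range_card (strictAnti_intCast_sub m).antitone (lowerD c l)
  have hmono : ∑ x ∈ range #(lowerD c l), ((m : ℤ) - x) ≤ Rsum m n nn c l := by
    rw [hR, ← hcard]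
    exact sum_range_intCast_sub_mono (Nat.le_add_right _ _)
      (by have := card_lowerD_add_card_lowerE_le l hmem; omega)
  rw [Lsum_eq_sub]
  rcases (lowerE c l).eq_empty_or_nonempty with hE | hE
  · rw [hE, card_empty, add_zero] at hcard
    rw [hE, sum_empty, sub_zero]
    refine ⟨hD.trans hmono, ?_⟩
    rw [hR, ← hcard]
    simpa using sum_fin_eq_sum_range_card_iff (strictAnti_intCast_sub m) (lowerD c l)
  · have hlt := sum_lowerE_pos l hmem hE
    have hLR : Lsum m c l < Rsum m n nn c l := by rw [Lsum_eq_sub]; linarith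
    exact ⟨hLR.le, iff_of_false hLR.ne fun h => hE.ne_empty h.1⟩

theorem Lsum_lt_Rsum_of_le (hn : 0 < n)
    (hwD : HasBlockWeights n nn c) (hmem : (c (Fin.last m)).2 = false)
    (hl : ((c (Fin.last m)).1 : ℕ) ≤ l) :
    Lsum m c l < Rsum m n nn c l := by
  have hcard : #(lowerD c l) + #(lowerE c l) + 2 * n = psum nn (l + 1) := by
    simpa [hl] using card_lowerD_add_card_lowerE_add l hwD hmem
  have hR : Rsum m n nn c l =
      n + ∑ x ∈ range (#(lowerD c l) + #(lowerE c l)), ((m : ℤ) - x) := by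
    rw [show #(lowerD c l) + #(lowerE c l) = psum nn (l + 1) - 2 * n by omega]
    exact if_neg (not_lt.2 hl)
  have hE := sum_lowerE_nonneg l hmem
  calc Lsum m c l ≤ ∑ s ∈ lowerD c l, ((m : ℤ) - (s : ℕ)) := by rw [Lsum_eq_sub]; linarith
    _ ≤ ∑ x ∈ range #(lowerD c l), ((m : ℤ) - x) :=
      sum_fin_le_sum_range_card (strictAnti_intCast_sub m).antitone _
    _ ≤ ∑ x ∈ range (#(lowerD c l) + #(lowerE c l)), ((m : ℤ) - x) :=
      sum_range_intCast_sub_mono (Nat.le_add_right _ _)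
        (by have := card_lowerD_add_card_lowerE_le l hmem; omega)
    _ < Rsum m n nn c l := by rw [hR]; omega

theorem Lsum_le_Rsum (hn : 0 < n)
    (hwD : HasBlockWeights n nn c) (hmem : (c (Fin.last m)).2 = false) :
    Lsum m c l ≤ Rsum m n nn c l := by
  rcases lt_or_ge (l : ℕ) (c (Fin.last m)).1 with hl | hl
  · exact (Lsum_le_Rsum_and_eq_iff_of_lt l hwD hmem hl).1
  · exact (Lsum_lt_Rsum_of_le l hn hwD hmem hl).le

theorem Lsum_eq_Rsum_iff (hn : 0 < n)
    (hwD : HasBlockWeights n nn c) (hmem : (c (Fin.last m)).2 = false) :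
    Lsum m c l = Rsum m n nn c l ↔ (l : ℕ) < (c (Fin.last m)).1 ∧
      lowerE c l = ∅ ∧ ∀ s, s ∈ lowerD c l ↔ (s : ℕ) < psum nn (l + 1) := by
  rcases lt_or_ge (l : ℕ) (c (Fin.last m)).1 with hl | hl
  · simpa [hl] using (Lsum_le_Rsum_and_eq_iff_of_lt l hwD hmem hl).2
  · exact iff_of_false (Lsum_lt_Rsum_of_le l hn hwD hmem hl).ne fun h => (not_lt.2 hl) h.1

theorem Lsum_eq_Rsum_iff_forall_lt_psum_iff (hn : 0 < n)
    (hwD : HasBlockWeights n nn c) (hmem : (c (Fin.last m)).2 = false) :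
    Lsum m c l = Rsum m n nn c l ↔ (l : ℕ) < (c (Fin.last m)).1 ∧
      ∀ s, ((c s).2 = false ∧ ((c s).1 : ℕ) ≤ l) ↔ (s : ℕ) < psum nn (l + 1) := by
  rw [Lsum_eq_Rsum_iff l hn hwD hmem]
  refine and_congr_right fun hl => ?_
  have hmemD : ∀ s, s ∈ lowerD c l ↔ (c s).2 = false ∧ ((c s).1 : ℕ) ≤ l := fun s => by
    simp only [lowerD, mem_filter, mem_univ, true_and, and_iff_right_iff_imp]
    rintro ⟨-, hsl⟩ hs
    obtain rfl : s = Fin.last m := Fin.ext hs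
    exact absurd hl (not_lt.2 hsl)
  have hcard : #(lowerD c l) + #(lowerE c l) = psum nn (l + 1) := by
    simpa [not_le.2 hl] using card_lowerD_add_card_lowerE_add l hwD hmem
  have hle := card_lowerD_add_card_lowerE_le l hmem
  simp only [← hmemD]
  refine ⟨And.right, fun hD => ⟨?_, hD⟩⟩
  have := card_eq_of_forall_mem_iff_val_lt (by omega) hD
  exact card_eq_zero.1 (by omega)

theorem forall_Lsum_eq_Rsum_iff (hn : 0 < n) (hD0 : ∀ s, (c s).1 = Fin.last k → (c s).2 = false)
    (hwD : HasBlockWeights n nn c) (hmem : (c (Fin.last m)).2 = false) :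
    (∀ l, Lsum m c l = Rsum m n nn c l) ↔
      (c (Fin.last m)).1 = Fin.last k ∧ (∀ s, (c s).2 = false) ∧
        ∀ (l : Fin k) s, ((c s).1 = l.castSucc ∧ (c s).2 = false) ↔
          psum nn l ≤ s ∧ (s : ℕ) < psum nn (l + 1) := by
  have hblocks := fun s : Fin (m + 1) => forall_le_iff_lt_iff_forall_eq_iff (psum_mono nn)
    (by simp [psum]) (k := k) (g := (c s).1) (v := s)
  constructor
  · intro hall
    have hi : (c (Fin.last m)).1 = Fin.last k := by
      by_contra hi
      obtain ⟨j, hj⟩ := Fin.exists_castSucc_eq.2 hi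
      have := ((Lsum_eq_Rsum_iff j hn hwD hmem).1 (hall j)).1
      simp [← hj] at this
    have hflag : ∀ s, (c s).2 = false := by
      intro s
      by_contra hs
      obtain ⟨j, hj⟩ := Fin.exists_castSucc_eq.2 (mt (hD0 s) hs)
      have hE := ((Lsum_eq_Rsum_iff j hn hwD hmem).1 (hall j)).2.1
      exact hs (by simpa [lowerE, ← hj] using eq_empty_iff_forall_notMem.1 hE s)
    refine ⟨hi, hflag, fun l s => ?_⟩
    have := (hblocks s).1 (fun j hj => by
      simpa [hflag s] using ((Lsum_eq_Rsum_iff_forall_lt_psum_iff ⟨j, hj⟩ hn hwD hmem).1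
        (hall _)).2 s) l l.isLt
    simpa [Fin.ext_iff, hflag s] using this
  · rintro ⟨hi, hflag, hblock⟩ l
    refine (Lsum_eq_Rsum_iff_forall_lt_psum_iff l hn hwD hmem).2 ⟨by simp [hi], fun s => ?_⟩
    have := (hblocks s).2 (fun j hj => by
      simpa [Fin.ext_iff, hflag s] using hblock ⟨j, hj⟩ s) l l.isLt
    simpa [hflag s] using this

end Exponent

theorem stmt14_general (m n k : ℕ) (hn : 0 < n)
    (nn : Fin k → ℕ) (r : ℕ)
    (c : Fin (m + 1) → Fin (k + 1) × Bool)
    (hD0 : ∀ s, (c s).1 = Fin.last k → (c s).2 = false)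
    (hwD : ∀ i : Fin k,
      (∑ s ∈ Finset.univ.filter (fun s : Fin (m + 1) => (c s).1 = i.castSucc),
        (if (s : ℕ) = m then 2 * n else 1)) = nn i)
    (hwr : (∑ s ∈ Finset.univ.filter (fun s : Fin (m + 1) => (c s).1 = Fin.last k),
        (if (s : ℕ) = m then 2 * n else 1)) = r)
    (hmem : (c ⟨m, Nat.lt_succ_self m⟩).2 = false) :
    (∀ l : Fin k,
      Lsum m c l ≤ Rsum m n nn c l ∧
      (Lsum m c l = Rsum m n nn c l ↔
        ((l : ℕ) < ((c ⟨m, Nat.lt_succ_self m⟩).1 : ℕ) ∧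
          ∀ s : Fin (m + 1),
            ((c s).2 = false ∧ ((c s).1 : ℕ) ≤ (l : ℕ)) ↔ (s : ℕ) < psum nn ((l : ℕ) + 1)))) ∧
    ((∀ l : Fin k, Lsum m c l = Rsum m n nn c l) ↔
      ((c ⟨m, Nat.lt_succ_self m⟩).1 = Fin.last k ∧ (∀ s, (c s).2 = false) ∧
        ∀ l : Fin k, ∀ s : Fin (m + 1),
          ((c s).1 = l.castSucc ∧ (c s).2 = false) ↔
            (psum nn (l : ℕ) ≤ (s : ℕ) ∧ (s : ℕ) < psum nn ((l : ℕ) + 1)))) ∧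
    ((∀ l : Fin k, Lsum m c l = Rsum m n nn c l) → 2 * n ≤ r) := by
  have hall := forall_Lsum_eq_Rsum_iff hn hD0 hwD hmem
  refine ⟨fun l => ⟨Lsum_le_Rsum l hn hwD hmem,
    Lsum_eq_Rsum_iff_forall_lt_psum_iff l hn hwD hmem⟩, hall, fun h => ?_⟩
  have hlast : Fin.last m ∈ univ.filter fun s => (c s).1 = Fin.last k :=
    mem_filter.2 ⟨mem_univ _, (hall.1 h).1⟩
  simpa [weight, ← hwr] using single_le_sum (f := weight m n) (fun _ _ => Nat.zero_le _) hlast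

/-- For the weighted partition `(D_1,E_1,…,D_k,E_k,D_0)` of `[1, m+1]`
(weight `1` on `[1,m]`, weight `2n` on `m+1`) subordinate to `(n_1,…,n_k,r)` and with
`m+1 ∈ D_i`: for every `ℓ ∈ [1,k]`, `L_ℓ ≤ R_ℓ` with equality iff (`i = 0` or `ℓ < i`) and
`D_1 ∪ ⋯ ∪ D_ℓ = [1, ν_ℓ]`.  Consequently `L_ℓ = R_ℓ` holds for all `ℓ` iff `m+1 ∈ D_0`,
all the `E_ℓ` are empty and `D_ℓ = [ν_{ℓ-1}+1, ν_ℓ]` for every `ℓ`; in that case `r ≥ 2n`. -/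
theorem stmt14 (m n k : ℕ) (hm : 0 < m) (hn : 0 < n)
    (nn : Fin k → ℕ) (hpos : ∀ i, 1 ≤ nn i) (r : ℕ)
    (hsum : (∑ i, nn i) + r = m + 2 * n)
    (c : Fin (m + 1) → Fin (k + 1) × Bool)
    (hD0 : ∀ s, (c s).1 = Fin.last k → (c s).2 = false)
    (hwD : ∀ i : Fin k,
      (∑ s ∈ Finset.univ.filter (fun s : Fin (m + 1) => (c s).1 = i.castSucc),
        (if (s : ℕ) = m then 2 * n else 1)) = nn i)
    (hwr : (∑ s ∈ Finset.univ.filter (fun s : Fin (m + 1) => (c s).1 = Fin.last k),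
        (if (s : ℕ) = m then 2 * n else 1)) = r)
    (hmem : (c ⟨m, Nat.lt_succ_self m⟩).2 = false) :
    (∀ l : Fin k,
      Lsum m c l ≤ Rsum m n nn c l ∧
      (Lsum m c l = Rsum m n nn c l ↔
        ((l : ℕ) < ((c ⟨m, Nat.lt_succ_self m⟩).1 : ℕ) ∧
          ∀ s : Fin (m + 1),
            ((c s).2 = false ∧ ((c s).1 : ℕ) ≤ (l : ℕ)) ↔ (s : ℕ) < psum nn ((l : ℕ) + 1)))) ∧
    ((∀ l : Fin k, Lsum m c l = Rsum m n nn c l) ↔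
      ((c ⟨m, Nat.lt_succ_self m⟩).1 = Fin.last k ∧ (∀ s, (c s).2 = false) ∧
        ∀ l : Fin k, ∀ s : Fin (m + 1),
          ((c s).1 = l.castSucc ∧ (c s).2 = false) ↔
            (psum nn (l : ℕ) ≤ (s : ℕ) ∧ (s : ℕ) < psum nn ((l : ℕ) + 1)))) ∧
    ((∀ l : Fin k, Lsum m c l = Rsum m n nn c l) → 2 * n ≤ r) :=
  stmt14_general m n k hn nn r c hD0 hwD hwr hmem

end Stmt14
end

section
/- Let m, n ≥ 1 and N = m + 2n. Let w = τ𝔠 ∈ 𝒲_N be an involution (w² = 1) such that both w and w⁻¹ map every vector e_s − e_{s+1} with s ∈ [1, m−1] ∪ [m+1, N−1] to a positive root. Then there exist nonnegative integers m_1, m_2, m_3, m_4, m_5, m_6, m_7, m_8 with m_1+m_2+m_3+m_4 = m, m_5+m_6+m_7+m_8 = 2n, m_2 = m_5 and m_3 = m_8, such that, denoting by B_1,…,B_8 the partition of [1,N] into consecutive intervals of lengths m_1,…,m_8: (a) w e_x = e_x for all x ∈ B_1 ∪ B_6; (b) w e_x = e_{φ(x)} for x ∈ B_2, where φ : B_2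 → B_5 is the order preserving bijection, and w e_x = e_{φ⁻¹(x)} for x ∈ B_5; (c) w e_x = −e_{ψ(x)} for x ∈ B_3, where ψ : B_3 → B_8 is the order reversing bijection, and w e_x = −e_{ψ⁻¹(x)} for x ∈ B_8; (d) w e_x = −e_{ρ(x)} for x ∈ B_4 and w e_x = −e_{ρ'(x)} for x ∈ B_7, where ρ and ρ' are the order reversing involutions of B_4 and B_7 respectively. -/
namespace Stmt16

/-- A positive root of type `C_N` in `ℝ^N`: `e_i - e_j` (`i < j`) or `e_i + e_j` (`i ≤ j`). -/
def IsPosRoot {N : ℕ} (v : Fin N → ℝ) : Prop :=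
  (∃ i j : Fin N, i < j ∧ v = Pi.single i 1 - Pi.single j 1) ∨
  (∃ i j : Fin N, i ≤ j ∧ v = Pi.single i (1 : ℝ) + Pi.single j 1)

/-- The image `w e_i` of `e_i` under the signed permutation `w = τ𝔠`. -/
def wE {N : ℕ} (τ : Equiv.Perm (Fin N)) (c : Finset (Fin N)) (i : Fin N) : Fin N → ℝ :=
  (if i ∈ c then (-1 : ℝ) else 1) • (Pi.single (τ i) 1 : Fin N → ℝ)

/-- The image `w⁻¹ e_u` of `e_u` under the inverse of the signed permutation `w = τ𝔠`. -/
def wInvE {N : ℕ} (τ : Equiv.Perm (Fin N)) (c : Finset (Fin N)) (u : Fin N) : Fin N → ℝ :=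
  (if τ.symm u ∈ c then (-1 : ℝ) else 1) • (Pi.single (τ.symm u) 1 : Fin N → ℝ)

lemma wE_apply {N : ℕ} (τ : Equiv.Perm (Fin N)) (c : Finset (Fin N)) (i k : Fin N) :
    wE τ c i k = (if i ∈ c then (-1 : ℝ) else 1) * (if k = τ i then 1 else 0) := by
  simp [wE, Pi.single_apply]

lemma decode {N : ℕ} (τ : Equiv.Perm (Fin N)) (c : Finset (Fin N)) (x y : Fin N)
    (hxy : x ≠ y) (h : IsPosRoot (wE τ c x - wE τ c y)) :
    (x ∈ c → y ∈ c) ∧ (x ∉ c → y ∉ c → τ x < τ y) ∧ (x ∈ c → y ∈ c → τ y < τ x) := by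
  have hτ : τ x ≠ τ y := fun h' => hxy (τ.injective h')
  rcases h with ⟨i, j, hij, he⟩ | ⟨i, j, hij, he⟩
  · have hne : i ≠ j := ne_of_lt hij
    have hx := congrFun he (τ x)
    have hy := congrFun he (τ y)
    rw [Pi.sub_apply, wE_apply, wE_apply] at hx hy
    simp only [Pi.sub_apply, Pi.single_apply] at hx hy
    rw [if_neg hτ] at hx
    rw [if_neg (Ne.symm hτ)] at hy
    have extj : ∀ z : Fin N, (-1 : ℝ) = (if z = i then 1 else 0) - (if z = j then 1 else 0) →
        z = j := by
      intro z h'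
      by_contra hz
      rw [if_neg hz] at h'
      split_ifs at h' <;> norm_num at h'
    have exti : ∀ z : Fin N, (1 : ℝ) = (if z = i then 1 else 0) - (if z = j then 1 else 0) →
        z = i := by
      intro z h'
      by_contra hz
      rw [if_neg hz] at h'
      split_ifs at h' <;> norm_num at h'
    by_cases hxc : x ∈ c <;> by_cases hyc : y ∈ c
    · rw [if_pos hxc] at hx; rw [if_pos hyc] at hy
      norm_num at hx hy
      refine ⟨fun _ => hyc, fun h' => absurd hxc h', fun _ _ => ?_⟩
      rw [extj _ hx, exti _ hy]
      exact hij
    · exfalso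
      rw [if_pos hxc] at hx; rw [if_neg hyc] at hy
      norm_num at hx hy
      exact hτ ((extj _ hx).trans (extj _ hy).symm)
    · exact ⟨fun h' => absurd h' hxc, fun _ h' => absurd hyc h', fun h' => absurd h' hxc⟩
    · rw [if_neg hxc] at hx; rw [if_neg hyc] at hy
      norm_num at hx hy
      refine ⟨fun h' => absurd h' hxc, fun _ _ => ?_, fun h' => absurd h' hxc⟩
      rw [exti _ hx, extj _ hy]
      exact hij
  · have hx := congrFun he (τ x)
    have hy := congrFun he (τ y)
    rw [Pi.sub_apply, wE_apply, wE_apply] at hx hy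
    simp only [Pi.add_apply, Pi.single_apply] at hx hy
    rw [if_neg hτ] at hx
    rw [if_neg (Ne.symm hτ)] at hy
    have hxc : x ∉ c := by
      intro hxc
      rw [if_pos hxc] at hx
      norm_num at hx
      split_ifs at hx <;> norm_num at hx
    have hyc : y ∈ c := by
      by_contra hyc
      rw [if_neg hyc] at hy
      norm_num at hy
      split_ifs at hy <;> norm_num at hy
    exact ⟨fun h' => absurd h' hxc, fun _ h' => absurd hyc h', fun h' => absurd h' hxc⟩


lemma chainLe (f : ℕ → ℕ) (lo hi : ℕ) (h : ∀ k, lo ≤ k → k + 1 < hi → f k < f (k + 1)) :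
    ∀ d x, lo ≤ x → x + d < hi → f x + d ≤ f (x + d) := by
  intro d
  induction d with
  | zero => intro x _ _; simp
  | succ d ih =>
    intro x hx hxd
    have h1 := ih x hx (by omega)
    have h2 := h (x + d) (by omega) (by omega)
    rw [show x + (d + 1) = x + d + 1 from rfl]
    omega

lemma chainGe (f : ℕ → ℕ) (lo hi : ℕ) (h : ∀ k, lo ≤ k → k + 1 < hi → f (k + 1) < f k) :
    ∀ d x, lo ≤ x → x + d < hi → f (x + d) + d ≤ f x := by
  intro d
  induction d with
  | zero => intro x _ _; simp
  | succ d ih =>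
    intro x hx hxd
    have h1 := ih x hx (by omega)
    have h2 := h (x + d) (by omega) (by omega)
    rw [show x + (d + 1) = x + d + 1 from rfl]
    omega

lemma key (m N : ℕ) (hmN : m ≤ N) (t : ℕ → ℕ) (cb : ℕ → Prop)
    (ht : ∀ k, k < N → t k < N)
    (hti : ∀ k, k < N → t (t k) = k)
    (htc : ∀ k, k < N → (cb k ↔ cb (t k)))
    (H1 : ∀ k, k + 1 < N → k + 1 ≠ m → cb k → cb (k + 1))
    (H2 : ∀ k, k + 1 < N → k + 1 ≠ m → ¬ cb k → ¬ cb (k + 1) → t k < t (k + 1))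
    (H3 : ∀ k, k + 1 < N → k + 1 ≠ m → cb k → cb (k + 1) → t (k + 1) < t k) :
    ∃ m1 m2 m3 m4 m5 m6 m7 m8 : ℕ,
      m1 + m2 + m3 + m4 = m ∧ m + (m5 + m6 + m7 + m8) = N ∧ m2 = m5 ∧ m3 = m8 ∧
      (∀ x, x < N → x < m1 → t x = x ∧ ¬ cb x) ∧
      (∀ x, x < N → m + m5 ≤ x → x < m + m5 + m6 → t x = x ∧ ¬ cb x) ∧
      (∀ x, x < N → m1 ≤ x → x < m1 + m2 → t x + m1 = x + m ∧ ¬ cb x) ∧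
      (∀ x, x < N → m ≤ x → x < m + m5 → t x + m = x + m1 ∧ ¬ cb x) ∧
      (∀ x, x < N → m1 + m2 ≤ x → x < m1 + m2 + m3 → x + t x + 1 = m1 + m2 + N ∧ cb x) ∧
      (∀ x, x < N → m + m5 + m6 + m7 ≤ x → x + t x + 1 = m1 + m2 + N ∧ cb x) ∧
      (∀ x, x < N → m1 + m2 + m3 ≤ x → x < m → x + t x + 1 = m1 + m2 + m3 + m ∧ cb x) ∧
      (∀ x, x < N → m + m5 + m6 ≤ x → x < m + m5 + m6 + m7 →
        x + t x + 1 = (m + m5 + m6) + (m + m5 + m6 + m7) ∧ cb x) := by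
  -- structure of cb: lower interval of each block is off, upper is on
  have hup1 : ∀ k, k + 1 < m → cb k → cb (k + 1) := fun k hk hck =>
    H1 k (by omega) (by omega) hck
  have hup2 : ∀ k, m ≤ k → k + 1 < N → cb k → cb (k + 1) := fun k hk hk2 hck =>
    H1 k hk2 (by omega) hck
  obtain ⟨a, haS, hale, hamin⟩ :
      ∃ a, (m ≤ a ∨ cb a) ∧ (a ≤ m) ∧ (∀ k, k < a → ¬ m ≤ k ∧ ¬ cb k) :=
    ⟨sInf {k | m ≤ k ∨ cb k}, by exact Nat.sInf_mem (s := {k | m ≤ k ∨ cb k}) ⟨m, by exact Or.inl le_rfl⟩, by exact Nat.sInf_le (by exact Or.inl le_rfl),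
      fun k hk => by
        have h' := Nat.notMem_of_lt_sInf hk
        simp only [Set.mem_setOf_eq, not_or, not_and] at h'
        exact h'⟩
  have ham : a ≤ m := hale
  have haS : m ≤ a ∨ cb a := haS
  have hnc_lo : ∀ k, k < a → ¬ cb k ∧ k < m := by
    intro k hk
    have h' := hamin k hk
    exact ⟨h'.2, by omega⟩
  have hc_mid : ∀ k, a ≤ k → k < m → cb k := by
    have base : ∀ d, a + d < m → cb (a + d) := by
      intro d
      induction d with
      | zero =>
        intro h
        rcases haS with h' | h'
        · omega
        · simpa using h'
      | succ d ih =>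
        intro h
        have h1 := ih (by omega)
        exact hup1 (a + d) (by omega) h1
    intro k hak hkm
    have := base (k - a) (by omega)
    rwa [Nat.add_sub_cancel' hak] at this
  obtain ⟨b, hbS, hble, hbmin⟩ :
      ∃ b, (N ≤ b ∨ (m ≤ b ∧ cb b)) ∧ (b ≤ N) ∧ (∀ k, k < b → ¬ N ≤ k ∧ (m ≤ k → ¬ cb k)) :=
    ⟨sInf {k | N ≤ k ∨ (m ≤ k ∧ cb k)}, by exact Nat.sInf_mem (s := {k | N ≤ k ∨ (m ≤ k ∧ cb k)}) ⟨N, by exact Or.inl le_rfl⟩, by exact Nat.sInf_le (by exact Or.inl le_rfl),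
      fun k hk => by
        have h' := Nat.notMem_of_lt_sInf hk
        simp only [Set.mem_setOf_eq, not_or, not_and] at h'
        exact h'⟩
  have hbN : b ≤ N := hble
  have hbm : m ≤ b := by rcases hbS with h | h; omega; exact h.1
  have hnc_mid : ∀ k, m ≤ k → k < b → ¬ cb k := fun k hmk hkb => (hbmin k hkb).2 hmk
  have hc_hi : ∀ k, b ≤ k → k < N → cb k := by
    have base : ∀ d, b + d < N → cb (b + d) := by
      intro d
      induction d with
      | zero =>
        intro h
        rcases hbS with h' | h'
        · omega
        · simpa using h'.2
      | succ d ih =>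
        intro h
        have h1 := ih (by omega)
        exact hup2 (b + d) (by omega) (by omega) h1
    intro k hbk hkN
    have := base (k - b) (by omega)
    rwa [Nat.add_sub_cancel' hbk] at this
  -- range facts
  have htlow : ∀ k, k < N → ¬ cb k → (t k < a ∨ (m ≤ t k ∧ t k < b)) := by
    intro k hk hck
    have h1 : ¬ cb (t k) := fun h' => hck ((htc k hk).mpr h')
    have h2 := ht k hk
    rcases Nat.lt_or_ge (t k) m with h3 | h3
    · left; by_contra h4; exact h1 (hc_mid _ (by omega) h3)
    · right; refine ⟨h3, ?_⟩; by_contra h4; exact h1 (hc_hi _ (by omega) h2)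
  have hthigh : ∀ k, k < N → cb k → ((a ≤ t k ∧ t k < m) ∨ b ≤ t k) := by
    intro k hk hck
    have h1 : cb (t k) := (htc k hk).mp hck
    have h2 := ht k hk
    rcases Nat.lt_or_ge (t k) m with h3 | h3
    · left; refine ⟨?_, h3⟩; by_contra h4; exact (hnc_lo _ (by omega)).1 h1
    · right; by_contra h4; exact hnc_mid _ h3 (by omega) h1
  -- monotonicity steps
  have mstep1 : ∀ k, 0 ≤ k → k + 1 < a → t k < t (k + 1) := by
    intro k _ hk
    exact H2 k (by omega) (by omega) (hnc_lo k (by omega)).1 (hnc_lo (k + 1) (by omega)).1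
  have mstep2 : ∀ k, m ≤ k → k + 1 < b → t k < t (k + 1) := by
    intro k hk hk2
    exact H2 k (by omega) (by omega) (hnc_mid k hk (by omega)) (hnc_mid (k + 1) (by omega) (by omega))
  have astep3 : ∀ k, a ≤ k → k + 1 < m → t (k + 1) < t k := by
    intro k hk hk2
    exact H3 k (by omega) (by omega) (hc_mid k hk (by omega)) (hc_mid (k + 1) (by omega) (by omega))
  have astep4 : ∀ k, b ≤ k → k + 1 < N → t (k + 1) < t k := by
    intro k hk hk2
    exact H3 k (by omega) (by omega) (hc_hi k hk (by omega)) (hc_hi (k + 1) (by omega) (by omega))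
  have smono1 : ∀ x y, x < y → y < a → t x < t y := by
    intro x y hxy hy
    have h := chainLe t 0 a mstep1 (y - x) x (by omega) (by omega)
    rw [Nat.add_sub_cancel' hxy.le] at h
    omega
  have smono2 : ∀ x y, m ≤ x → x < y → y < b → t x < t y := by
    intro x y hmx hxy hy
    have h := chainLe t m b mstep2 (y - x) x hmx (by omega)
    rw [Nat.add_sub_cancel' hxy.le] at h
    omega
  have santi3 : ∀ x y, a ≤ x → x < y → y < m → t y < t x := by
    intro x y hax hxy hy
    have h := chainGe t a m astep3 (y - x) x hax (by omega)
    rw [Nat.add_sub_cancel' hxy.le] at h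
    omega
  have santi4 : ∀ x y, b ≤ x → x < y → y < N → t y < t x := by
    intro x y hbx hxy hy
    have h := chainGe t b N astep4 (y - x) x hbx (by omega)
    rw [Nat.add_sub_cancel' hxy.le] at h
    omega
  -- block B1 / B2 inside [0, a)
  obtain ⟨m1, hm1S, hm1le, hm1min⟩ :
      ∃ m1, (a ≤ m1 ∨ m ≤ t m1) ∧ (m1 ≤ a) ∧ (∀ k, k < m1 → ¬ a ≤ k ∧ ¬ m ≤ t k) :=
    ⟨sInf {k | a ≤ k ∨ m ≤ t k}, by exact Nat.sInf_mem (s := {k | a ≤ k ∨ m ≤ t k}) ⟨a, by exact Or.inl le_rfl⟩, by exact Nat.sInf_le (by exact Or.inl le_rfl),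
      fun k hk => by
        have h' := Nat.notMem_of_lt_sInf hk
        simp only [Set.mem_setOf_eq, not_or, not_and] at h'
        exact h'⟩
  have hm1a : m1 ≤ a := hm1le
  have hB1a : ∀ x, x < m1 → t x < a := by
    intro x hx
    have h' := hm1min x hx
    rcases htlow x (by omega) (hnc_lo x (by omega)).1 with h | h
    · exact h
    · omega
  have hfix1 : ∀ x, x < m1 → t x = x := by
    intro x hx
    have hxa : x < a := lt_of_lt_of_le hx hm1a
    have h1 := hB1a x hx
    have h2 := hti x (by omega)
    rcases lt_trichotomy (t x) x with h | h | h
    · have := smono1 (t x) x h hxa; omega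
    · exact h
    · have := smono1 x (t x) h h1; omega
  have hB2a : ∀ x, m1 ≤ x → x < a → m ≤ t x ∧ t x < b := by
    intro x hx hxa
    have hm' : m ≤ t x := by
      have hbase : m ≤ t m1 := by rcases hm1S with h | h; omega; exact h
      rcases Nat.eq_or_lt_of_le hx with h | h
      · rw [← h]; exact hbase
      · have := smono1 m1 x h hxa; omega
    rcases htlow x (by omega) (hnc_lo x (by omega)).1 with h | h
    · omega
    · exact ⟨hm', h.2⟩
  -- block B5 / B6 inside [m, b)
  obtain ⟨p, hpS, hple, hpmin⟩ :
      ∃ p, (b ≤ p ∨ (m ≤ p ∧ m ≤ t p)) ∧ (p ≤ b) ∧ (∀ k, k < p → ¬ b ≤ k ∧ (m ≤ k → ¬ m ≤ t k)) :=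
    ⟨sInf {k | b ≤ k ∨ (m ≤ k ∧ m ≤ t k)}, by exact Nat.sInf_mem (s := {k | b ≤ k ∨ (m ≤ k ∧ m ≤ t k)}) ⟨b, by exact Or.inl le_rfl⟩, by exact Nat.sInf_le (by exact Or.inl le_rfl),
      fun k hk => by
        have h' := Nat.notMem_of_lt_sInf hk
        simp only [Set.mem_setOf_eq, not_or, not_and] at h'
        exact h'⟩
  have hpb : p ≤ b := hple
  have hmp : m ≤ p := by rcases hpS with h | h; omega; exact h.1
  have hB5a : ∀ u, m ≤ u → u < p → m1 ≤ t u ∧ t u < a := by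
    intro u hmu hup
    have h' := hpmin u hup
    have htu : t u < m := by have := h'.2 hmu; omega
    have hua : t u < a := by
      rcases htlow u (by omega) (hnc_mid u hmu (by omega)) with h | h
      · exact h
      · omega
    refine ⟨?_, hua⟩
    by_contra h4
    push_neg at h4
    have h5 := hfix1 (t u) h4
    have h6 := hti u (by omega)
    omega
  have hB6a : ∀ u, p ≤ u → u < b → m ≤ t u ∧ t u < b ∧ p ≤ t u := by
    intro u hpu hub
    have hm' : m ≤ t u := by
      have hbase : m ≤ t p := by rcases hpS with h | h; omega; exact h.2
      rcases Nat.eq_or_lt_of_le hpu with h | h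
      · rw [← h]; exact hbase
      · have := smono2 p u hmp h hub; omega
    have hub' : t u < b := by
      rcases htlow u (by omega) (hnc_mid u (by omega) hub) with h | h
      · omega
      · exact h.2
    refine ⟨hm', hub', ?_⟩
    by_contra h4
    push_neg at h4
    have h5 := hB5a (t u) hm' h4
    have h6 := hti u (by omega)
    omega
  have hfix6 : ∀ u, p ≤ u → u < b → t u = u := by
    intro u hpu hub
    obtain ⟨h1, h2, h3⟩ := hB6a u hpu hub
    have h4 := hti u (by omega)
    rcases lt_trichotomy (t u) u with h | h | h
    · have := smono2 (t u) u h1 h hub; omega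
    · exact h
    · have := smono2 u (t u) (by omega) h h2; omega
  have hB2 : ∀ x, m1 ≤ x → x < a → (t x + m1 = x + m ∧ t x < p) := by
    intro x hx hxa
    obtain ⟨hm', hub⟩ := hB2a x hx hxa
    have htxp : t x < p := by
      by_contra h4
      push_neg at h4
      have h5 := hfix6 (t x) h4 hub
      have h6 := hti x (by omega)
      omega
    have hlow := chainLe t 0 a mstep1 (x - m1) m1 (by omega) (by omega)
    rw [Nat.add_sub_cancel' hx] at hlow
    have hbase1 : m ≤ t m1 := by rcases hm1S with h | h; omega; exact h
    have hba : m < p := by omega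
    have hbase2 : m1 ≤ t m := (hB5a m le_rfl hba).1
    have hup := chainLe t m b mstep2 (t x - m) m le_rfl (by omega)
    rw [Nat.add_sub_cancel' hm'] at hup
    rw [hti x (by omega)] at hup
    exact ⟨by omega, htxp⟩
  have hB5 : ∀ u, m ≤ u → u < p → t u + m = u + m1 := by
    intro u hmu hup
    obtain ⟨h1, h2⟩ := hB5a u hmu hup
    have h3 := (hB2 (t u) h1 h2).1
    have h4 := hti u (by omega)
    omega
  have hp_val : p + m1 = m + a := by
    rcases Nat.lt_or_ge m1 a with h | h
    · have h1 := hB2 (a - 1) (by omega) (by omega)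
      by_contra hne
      rcases Nat.lt_or_ge (p + m1) (m + a) with hlt | hge
      · omega
      · have hu1 : m ≤ m + a - m1 := by omega
        have hu2 : m + a - m1 < p := by omega
        have h5 := hB5 (m + a - m1) hu1 hu2
        have h6 := (hB5a (m + a - m1) hu1 hu2).2
        omega
    · by_contra hne
      have hmlt : m < p := by omega
      have := hB5a m le_rfl hmlt
      omega
  -- block B3 / B4 inside [a, m)
  obtain ⟨q, hqS, hqle, hqmin⟩ :
      ∃ q, (m ≤ q ∨ (a ≤ q ∧ t q < m)) ∧ (q ≤ m) ∧ (∀ k, k < q → ¬ m ≤ k ∧ (a ≤ k → ¬ t k < m)) :=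
    ⟨sInf {k | m ≤ k ∨ (a ≤ k ∧ t k < m)}, by exact Nat.sInf_mem (s := {k | m ≤ k ∨ (a ≤ k ∧ t k < m)}) ⟨m, by exact Or.inl le_rfl⟩, by exact Nat.sInf_le (by exact Or.inl le_rfl),
      fun k hk => by
        have h' := Nat.notMem_of_lt_sInf hk
        simp only [Set.mem_setOf_eq, not_or, not_and] at h'
        exact h'⟩
  have hqm : q ≤ m := hqle
  have haq : a ≤ q := by rcases hqS with h | h; omega; exact h.1
  have hB3a : ∀ x, a ≤ x → x < q → b ≤ t x := by
    intro x hax hxq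
    have h' := hqmin x hxq
    have h1 : m ≤ t x := by have := h'.2 hax; omega
    rcases hthigh x (by omega) (hc_mid x hax (by omega)) with h | h
    · omega
    · exact h
  have hB4a : ∀ x, q ≤ x → x < m → a ≤ t x ∧ t x < m ∧ q ≤ t x := by
    intro x hqx hxm
    have htxm : t x < m := by
      have hbase : t q < m := by rcases hqS with h | h; omega; exact h.2
      rcases Nat.eq_or_lt_of_le hqx with h | h
      · rw [← h]; exact hbase
      · have := santi3 q x (by omega) h hxm; omega
    have hax : a ≤ t x := by
      rcases hthigh x (by omega) (hc_mid x (by omega) hxm) with h | h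
      · exact h.1
      · omega
    refine ⟨hax, htxm, ?_⟩
    by_contra h4
    push_neg at h4
    have h5 := hB3a (t x) hax h4
    have h6 := hti x (by omega)
    omega
  -- block B7 / B8 inside [b, N)
  obtain ⟨r, hrS, hrle, hrmin⟩ :
      ∃ r, (N ≤ r ∨ (b ≤ r ∧ t r < m)) ∧ (r ≤ N) ∧ (∀ k, k < r → ¬ N ≤ k ∧ (b ≤ k → ¬ t k < m)) :=
    ⟨sInf {k | N ≤ k ∨ (b ≤ k ∧ t k < m)}, by exact Nat.sInf_mem (s := {k | N ≤ k ∨ (b ≤ k ∧ t k < m)}) ⟨N, by exact Or.inl le_rfl⟩, by exact Nat.sInf_le (by exact Or.inl le_rfl),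
      fun k hk => by
        have h' := Nat.notMem_of_lt_sInf hk
        simp only [Set.mem_setOf_eq, not_or, not_and] at h'
        exact h'⟩
  have hrN : r ≤ N := hrle
  have hbr : b ≤ r := by rcases hrS with h | h; omega; exact h.1
  have hB8a : ∀ u, r ≤ u → u < N → a ≤ t u ∧ t u < q := by
    intro u hru huN
    have htum : t u < m := by
      have hbase : t r < m := by rcases hrS with h | h; omega; exact h.2
      rcases Nat.eq_or_lt_of_le hru with h | h
      · rw [← h]; exact hbase
      · have := santi4 r u (by omega) h huN; omega
    have hau : a ≤ t u := by
      rcases hthigh u huN (hc_hi u (by omega) huN) with h | h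
      · exact h.1
      · omega
    refine ⟨hau, ?_⟩
    by_contra h4
    push_neg at h4
    have h5 := (hB4a (t u) h4 htum).2.1
    have h6 := hti u huN
    omega
  have hB7a : ∀ u, b ≤ u → u < r → b ≤ t u ∧ t u < r := by
    intro u hbu hur
    have h' := hrmin u hur
    have h1 : m ≤ t u := by have := h'.2 hbu; omega
    have hbt : b ≤ t u := by
      rcases hthigh u (by omega) (hc_hi u hbu (by omega)) with h | h
      · omega
      · exact h
    refine ⟨hbt, ?_⟩
    by_contra h4
    push_neg at h4
    have h5 := (hB8a (t u) h4 (ht u (by omega))).2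
    have h6 := hti u (by omega)
    omega
  have hB3b : ∀ x, a ≤ x → x < q → r ≤ t x := by
    intro x hax hxq
    have h1 := hB3a x hax hxq
    by_contra h4
    push_neg at h4
    have h5 := (hB7a (t x) h1 h4).1
    have h6 := hti x (by omega)
    omega
  -- formulas on the four c-blocks
  have hB4 : ∀ x, q ≤ x → x < m → x + t x + 1 = q + m := by
    intro x hqx hxm
    have h1 := hB4a x hqx hxm
    have hup := chainGe t a m astep3 (x - q) q (by omega) (by omega)
    rw [Nat.add_sub_cancel' hqx] at hup
    have h2 := (hB4a q le_rfl (by omega)).2.1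
    have hlow := chainGe t a m astep3 (m - 1 - x) x (by omega) (by omega)
    rw [show x + (m - 1 - x) = m - 1 by omega] at hlow
    have h3 := (hB4a (m - 1) (by omega) (by omega)).2.2
    omega
  have hB3 : ∀ x, a ≤ x → x < q → x + t x + 1 = a + N := by
    intro x hax hxq
    have h1 := hB3b x hax hxq
    have h1' := hB3a x hax hxq
    have htxN := ht x (by omega)
    have hup := chainGe t a m astep3 (x - a) a le_rfl (by omega)
    rw [Nat.add_sub_cancel' hax] at hup
    have h2 := ht a (by omega)
    have hlow := chainGe t b N astep4 (N - 1 - t x) (t x) h1' (by omega)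
    rw [show t x + (N - 1 - t x) = N - 1 by omega] at hlow
    rw [hti x (by omega)] at hlow
    have h3 := (hB8a (N - 1) (by omega) (by omega)).1
    omega
  have hB8 : ∀ u, r ≤ u → u < N → u + t u + 1 = a + N := by
    intro u hru huN
    obtain ⟨h1, h2⟩ := hB8a u hru huN
    have h3 := hB3 (t u) h1 h2
    have h4 := hti u huN
    omega
  have hq_r : q + r = a + N := by
    rcases Nat.lt_or_ge a q with h | h
    · have h3 := hB3 (q - 1) (by omega) (by omega)
      have h4 := hB3b (q - 1) (by omega) (by omega)
      have h4' := ht (q - 1) (by omega)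
      have hrN' : r < N := by omega
      have h5 := hB8 r le_rfl hrN'
      have h6 := (hB8a r le_rfl hrN').2
      omega
    · have hr2 : r = N := by
        by_contra h4
        have h5 := hB8a r le_rfl (by omega)
        omega
      omega
  have hB7 : ∀ u, b ≤ u → u < r → u + t u + 1 = b + r := by
    intro u hbu hur
    have h1 := hB7a u hbu hur
    have hup := chainGe t b N astep4 (u - b) b le_rfl (by omega)
    rw [Nat.add_sub_cancel' hbu] at hup
    have h2 := (hB7a b le_rfl (by omega)).2
    have hlow := chainGe t b N astep4 (r - 1 - u) u hbu (by omega)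
    rw [show u + (r - 1 - u) = r - 1 by omega] at hlow
    have h3 := (hB7a (r - 1) (by omega) (by omega)).1
    omega
  -- assemble
  refine ⟨m1, a - m1, q - a, m - q, p - m, b - p, r - b, N - r,
    by omega, by omega, by omega, by omega, ?_, ?_, ?_, ?_, ?_, ?_, ?_, ?_⟩
  · intro x _ hx
    exact ⟨hfix1 x hx, (hnc_lo x (by omega)).1⟩
  · intro x _ h1 h2
    have hx1 : p ≤ x := by omega
    have hx2 : x < b := by omega
    exact ⟨hfix6 x hx1 hx2, hnc_mid x (by omega) hx2⟩
  · intro x _ h1 h2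
    have hx2 : x < a := by omega
    exact ⟨(hB2 x h1 hx2).1, (hnc_lo x hx2).1⟩
  · intro x _ h1 h2
    have hx2 : x < p := by omega
    exact ⟨hB5 x h1 hx2, hnc_mid x h1 (by omega)⟩
  · intro x _ h1 h2
    have hx1 : a ≤ x := by omega
    have hx2 : x < q := by omega
    have h3 := hB3 x hx1 hx2
    exact ⟨by omega, hc_mid x hx1 (by omega)⟩
  · intro x hxN h1
    have hx1 : r ≤ x := by omega
    have h3 := hB8 x hx1 hxN
    exact ⟨by omega, hc_hi x (by omega) hxN⟩
  · intro x _ h1 h2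
    have hx1 : q ≤ x := by omega
    have h3 := hB4 x hx1 h2
    exact ⟨by omega, hc_mid x (by omega) h2⟩
  · intro x _ h1 h2
    have hx1 : b ≤ x := by omega
    have hx2 : x < r := by omega
    have h3 := hB7 x hx1 hx2
    exact ⟨by omega, hc_hi x hx1 (by omega)⟩

/-- Let `N = m + 2n` and let `w = τ𝔠 ∈ 𝒲_N` be an involution such that
both `w` and `w⁻¹` map every `e_s - e_{s+1}` with `s ∈ [1,m-1] ∪ [m+1,N-1]` (1-indexed) to
a positive root.  Then `[0, N)` splits into consecutive intervals `B_1, …, B_8` of lengths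
`m_1, …, m_8` with `m_1+m_2+m_3+m_4 = m`, `m_5+⋯+m_8 = 2n`, `m_2 = m_5`, `m_3 = m_8`, such
that `w` fixes `e_x` on `B_1 ∪ B_6`, exchanges `B_2` and `B_5` order preservingly with sign
`+`, exchanges `B_3` and `B_8` order reversingly with sign `-`, and acts on each of `B_4`,
`B_7` by the order reversing involution with sign `-`. -/
theorem stmt16 (m n : ℕ) (hm : 0 < m) (hn : 0 < n)
    (τ : Equiv.Perm (Fin (m + 2 * n))) (c : Finset (Fin (m + 2 * n)))
    (hinv : (∀ i, τ (τ i) = i) ∧ (∀ i, i ∈ c ↔ τ i ∈ c))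
    (hred : ∀ x y : Fin (m + 2 * n), (y : ℕ) = (x : ℕ) + 1 → (y : ℕ) ≠ m →
      IsPosRoot (wE τ c x - wE τ c y) ∧ IsPosRoot (wInvE τ c x - wInvE τ c y)) :
    ∃ m1 m2 m3 m4 m5 m6 m7 m8 : ℕ,
      m1 + m2 + m3 + m4 = m ∧ m5 + m6 + m7 + m8 = 2 * n ∧ m2 = m5 ∧ m3 = m8 ∧
      (∀ x : Fin (m + 2 * n), (x : ℕ) < m1 → τ x = x ∧ x ∉ c) ∧
      (∀ x : Fin (m + 2 * n), m + m5 ≤ (x : ℕ) → (x : ℕ) < m + m5 + m6 →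
        τ x = x ∧ x ∉ c) ∧
      (∀ x : Fin (m + 2 * n), m1 ≤ (x : ℕ) → (x : ℕ) < m1 + m2 →
        (τ x : ℕ) + m1 = (x : ℕ) + m ∧ x ∉ c) ∧
      (∀ x : Fin (m + 2 * n), m ≤ (x : ℕ) → (x : ℕ) < m + m5 →
        (τ x : ℕ) + m = (x : ℕ) + m1 ∧ x ∉ c) ∧
      (∀ x : Fin (m + 2 * n), m1 + m2 ≤ (x : ℕ) → (x : ℕ) < m1 + m2 + m3 →
        (x : ℕ) + (τ x : ℕ) + 1 = m1 + m2 + (m + 2 * n) ∧ x ∈ c) ∧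
      (∀ x : Fin (m + 2 * n), m + m5 + m6 + m7 ≤ (x : ℕ) →
        (x : ℕ) + (τ x : ℕ) + 1 = m1 + m2 + (m + 2 * n) ∧ x ∈ c) ∧
      (∀ x : Fin (m + 2 * n), m1 + m2 + m3 ≤ (x : ℕ) → (x : ℕ) < m →
        (x : ℕ) + (τ x : ℕ) + 1 = m1 + m2 + m3 + m ∧ x ∈ c) ∧
      (∀ x : Fin (m + 2 * n), m + m5 + m6 ≤ (x : ℕ) → (x : ℕ) < m + m5 + m6 + m7 →
        (x : ℕ) + (τ x : ℕ) + 1 = (m + m5 + m6) + (m + m5 + m6 + m7) ∧ x ∈ c) := by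
  classical
  let t : ℕ → ℕ := fun k =>
    if h : k < m + 2 * n then ((τ ⟨k, h⟩ : Fin (m + 2 * n)) : ℕ) else 0
  let cb : ℕ → Prop := fun k => ∃ h : k < m + 2 * n, (⟨k, h⟩ : Fin (m + 2 * n)) ∈ c
  have htdef : ∀ (k : ℕ) (h : k < m + 2 * n), t k = ((τ ⟨k, h⟩ : Fin (m + 2 * n)) : ℕ) :=
    fun k h => dif_pos h
  have hcdef : ∀ (k : ℕ) (h : k < m + 2 * n),
      cb k ↔ (⟨k, h⟩ : Fin (m + 2 * n)) ∈ c :=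
    fun k h => ⟨fun hh => hh.2, fun hh => ⟨h, hh⟩⟩
  have ht : ∀ k, k < m + 2 * n → t k < m + 2 * n := by
    intro k h
    rw [htdef k h]
    exact (τ _).isLt
  have hti : ∀ k, k < m + 2 * n → t (t k) = k := by
    intro k h
    rw [htdef k h, htdef _ (τ _).isLt, Fin.eta, hinv.1]
  have htc : ∀ k, k < m + 2 * n → (cb k ↔ cb (t k)) := by
    intro k h
    rw [hcdef k h, htdef k h, hcdef _ (τ _).isLt, Fin.eta]
    exact hinv.2 _
  have key3 : ∀ k, k + 1 < m + 2 * n → k + 1 ≠ m →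
      (cb k → cb (k + 1)) ∧ (¬ cb k → ¬ cb (k + 1) → t k < t (k + 1)) ∧
      (cb k → cb (k + 1) → t (k + 1) < t k) := by
    intro k hk hkm
    have hkk : k < m + 2 * n := by omega
    have hxy : (⟨k, hkk⟩ : Fin (m + 2 * n)) ≠ ⟨k + 1, hk⟩ := by
      intro h
      have := congrArg Fin.val h
      simp at this
    have hd := decode τ c ⟨k, hkk⟩ ⟨k + 1, hk⟩ hxy
      (hred ⟨k, hkk⟩ ⟨k + 1, hk⟩ rfl hkm).1
    rw [hcdef k hkk, hcdef (k + 1) hk, htdef k hkk, htdef (k + 1) hk]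
    exact ⟨hd.1, fun h1 h2 => hd.2.1 h1 h2, fun h1 h2 => hd.2.2 h1 h2⟩
  obtain ⟨m1, m2, m3, m4, m5, m6, m7, m8, hsum1, hsum2, h25, h38,
      c1, c2, c3, c4, c5, c6, c7, c8⟩ :=
    key m (m + 2 * n) (by omega) t cb ht hti htc
      (fun k hk hkm => (key3 k hk hkm).1)
      (fun k hk hkm => (key3 k hk hkm).2.1)
      (fun k hk hkm => (key3 k hk hkm).2.2)
  refine ⟨m1, m2, m3, m4, m5, m6, m7, m8, hsum1, by omega, h25, h38,
    ?_, ?_, ?_, ?_, ?_, ?_, ?_, ?_⟩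
  · intro x hx
    obtain ⟨he, hc'⟩ := c1 (x : ℕ) x.isLt hx
    rw [htdef _ x.isLt, Fin.eta] at he
    exact ⟨Fin.ext he, fun hxc => hc' ⟨x.isLt, hxc⟩⟩
  · intro x h1 h2
    obtain ⟨he, hc'⟩ := c2 (x : ℕ) x.isLt h1 h2
    rw [htdef _ x.isLt, Fin.eta] at he
    exact ⟨Fin.ext he, fun hxc => hc' ⟨x.isLt, hxc⟩⟩
  · intro x h1 h2
    obtain ⟨he, hc'⟩ := c3 (x : ℕ) x.isLt h1 h2
    rw [htdef _ x.isLt, Fin.eta] at he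
    exact ⟨he, fun hxc => hc' ⟨x.isLt, hxc⟩⟩
  · intro x h1 h2
    obtain ⟨he, hc'⟩ := c4 (x : ℕ) x.isLt h1 h2
    rw [htdef _ x.isLt, Fin.eta] at he
    exact ⟨he, fun hxc => hc' ⟨x.isLt, hxc⟩⟩
  · intro x h1 h2
    obtain ⟨he, hc'⟩ := c5 (x : ℕ) x.isLt h1 h2
    rw [htdef _ x.isLt, Fin.eta] at he
    exact ⟨he, hc'.2⟩
  · intro x h1
    obtain ⟨he, hc'⟩ := c6 (x : ℕ) x.isLt h1
    rw [htdef _ x.isLt, Fin.eta] at he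
    exact ⟨he, hc'.2⟩
  · intro x h1 h2
    obtain ⟨he, hc'⟩ := c7 (x : ℕ) x.isLt h1 h2
    rw [htdef _ x.isLt, Fin.eta] at he
    exact ⟨he, hc'.2⟩
  · intro x h1 h2
    obtain ⟨he, hc'⟩ := c8 (x : ℕ) x.isLt h1 h2
    rw [htdef _ x.isLt, Fin.eta] at he
    exact ⟨he, hc'.2⟩


end Stmt16
end
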